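/- arXiv:2001.10839 — 4 statements merged into one kernel-verified Lean document; each statement's English description precedes it below -/
import Mathlib

section
/- 2 ∈ D_0^{(pq)} if and only if q ≡ ±1 (mod 8). -/
open Finset Polynomial

noncomputable section

/-- The field `F₄` with four elements. -/
abbrev F4 : Type := GaloisField 2 2

/-- Generic generalized cyclotomic class of index `0` modulo `M`:
`{ g^(2t) * y^k mod M : 0 ≤ t < dHalf, 0 ≤ k < e }`. -/
def GC0 (g y M dHalf e : ℕ) : Finset ℕ :=
  ((Finset.range dHalf) ×ˢ (Finset.range e)).image
    (fun tk => g ^ (2 * tk.1) * y ^ tk.2 % M)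

/-- Generic generalized cyclotomic class of index `1` modulo `M`: `g · GC0 (mod M)`. -/
def GC1 (g y M dHalf e : ℕ) : Finset ℕ :=
  (GC0 g y M dHalf e).image (fun x => g * x % M)

/-- Class of index `h ∈ {0,1}`. -/
def GC (h g y M dHalf e : ℕ) : Finset ℕ :=
  if h = 0 then GC0 g y M dHalf e else GC1 g y M dHalf e

/-- `e_{i,j} = gcd(p^{i-1}(p-1), q^{j-1}(q-1))`. -/
def eij (p q i j : ℕ) : ℕ := Nat.gcd (p ^ (i - 1) * (p - 1)) (q ^ (j - 1) * (q - 1))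

/-- `d_{i,j} = p^{i-1}(p-1) q^{j-1}(q-1) / e_{i,j}`. -/
def dij (p q i j : ℕ) : ℕ := p ^ (i - 1) * (p - 1) * (q ^ (j - 1) * (q - 1)) / eij p q i j

/-- `D_h^{(p^i q^j)}`. -/
def DPQ (p q g y h i j : ℕ) : Finset ℕ :=
  GC h g y (p ^ i * q ^ j) (dij p q i j / 2) (eij p q i j)

/-- `D_h^{(2 p^i q^j)}`. -/
def D2PQ (p q g y h i j : ℕ) : Finset ℕ :=
  GC h g y (2 * (p ^ i * q ^ j)) (dij p q i j / 2) (eij p q i j)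

/-- `D_h^{(p^i)}`. -/
def DP (p g h i : ℕ) : Finset ℕ := GC h g 1 (p ^ i) (p ^ (i - 1) * (p - 1) / 2) 1

/-- `D_h^{(2p^i)}`. -/
def D2P (p g h i : ℕ) : Finset ℕ := GC h g 1 (2 * p ^ i) (p ^ (i - 1) * (p - 1) / 2) 1

/-- `D_h^{(q^j)}`. -/
def DQ (q g h j : ℕ) : Finset ℕ := GC h g 1 (q ^ j) (q ^ (j - 1) * (q - 1) / 2) 1

/-- `D_h^{(2q^j)}`. -/
def D2Q (q g h j : ℕ) : Finset ℕ := GC h g 1 (2 * q ^ j) (q ^ (j - 1) * (q - 1) / 2) 1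

/-- `c · A`. -/
def scaled (c : ℕ) (A : Finset ℕ) : Finset ℕ := A.image (fun x => c * x)

/-- `H_h^{(p^i q^j)} = p^{m-i} q^{n-j} D_h^{(p^i q^j)}`. -/
def HPQ (p q m n g y h i j : ℕ) : Finset ℕ :=
  scaled (p ^ (m - i) * q ^ (n - j)) (DPQ p q g y h i j)

/-- `H_h^{(2 p^i q^j)} = p^{m-i} q^{n-j} D_h^{(2 p^i q^j)}`. -/
def H2PQ (p q m n g y h i j : ℕ) : Finset ℕ :=
  scaled (p ^ (m - i) * q ^ (n - j)) (D2PQ p q g y h i j)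

/-- `H_h^{(p^i)} = p^{m-i} q^n D_h^{(p^i)}`. -/
def HP (p q m n g h i : ℕ) : Finset ℕ := scaled (p ^ (m - i) * q ^ n) (DP p g h i)

/-- `H_h^{(2p^i)} = p^{m-i} q^n D_h^{(2p^i)}`. -/
def H2P (p q m n g h i : ℕ) : Finset ℕ := scaled (p ^ (m - i) * q ^ n) (D2P p g h i)

/-- `H_h^{(q^j)} = p^m q^{n-j} D_h^{(q^j)}`. -/
def HQ (p q m n g h j : ℕ) : Finset ℕ := scaled (p ^ m * q ^ (n - j)) (DQ q g h j)

/-- `H_h^{(2q^j)} = p^m q^{n-j} D_h^{(2q^j)}`. -/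
def H2Q (p q m n g h j : ℕ) : Finset ℕ := scaled (p ^ m * q ^ (n - j)) (D2Q q g h j)

/-- `⋃_{i,j} H_h^{(2p^i q^j)} ∪ ⋃_i H_h^{(2p^i)} ∪ ⋃_j H_h^{(2q^j)}`. -/
def UnionH (p q m n g y h : ℕ) : Finset ℕ :=
  ((Finset.Icc 1 m).biUnion fun i => (Finset.Icc 1 n).biUnion fun j => H2PQ p q m n g y h i j)
    ∪ ((Finset.Icc 1 m).biUnion fun i => H2P p q m n g h i)
    ∪ ((Finset.Icc 1 n).biUnion fun j => H2Q p q m n g h j)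

/-- `⋃_{i,j} 2H_h^{(p^i q^j)} ∪ ⋃_i 2H_h^{(p^i)} ∪ ⋃_j 2H_h^{(q^j)}`. -/
def Union2H (p q m n g y h : ℕ) : Finset ℕ :=
  ((Finset.Icc 1 m).biUnion fun i =>
      (Finset.Icc 1 n).biUnion fun j => scaled 2 (HPQ p q m n g y h i j))
    ∪ ((Finset.Icc 1 m).biUnion fun i => scaled 2 (HP p q m n g h i))
    ∪ ((Finset.Icc 1 n).biUnion fun j => scaled 2 (HQ p q m n g h j))

/-- The quaternary generalized cyclotomic sequence of period `2 p^m q^n`. -/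
def seqS (p q m n g y : ℕ) (a b c d e : F4) (u : ℕ) : F4 :=
  let v := u % (2 * (p ^ m * q ^ n))
  if v = 0 then 0
  else if v = p ^ m * q ^ n then e
  else if v ∈ UnionH p q m n g y 0 then a
  else if v ∈ UnionH p q m n g y 1 then b
  else if v ∈ Union2H p q m n g y 0 then c
  else if v ∈ Union2H p q m n g y 1 then d
  else 0

/-- The generating polynomial `S(x) = ∑_{u=0}^{2p^m q^n - 1} s_u x^u ∈ F₄[x]`. -/
def genPoly (p q m n g y : ℕ) (a b c d e : F4) : Polynomial F4 :=
  ∑ u ∈ Finset.range (2 * (p ^ m * q ^ n)),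
    Polynomial.C (seqS p q m n g y a b c d e u) * Polynomial.X ^ u

/-- The linear complexity of a sequence over a field: the least `L > 0` admitting a linear
recurrence `s_{u+L} = c_1 s_{u+L-1} + ⋯ + c_L s_u`. -/
def LinearComplexity {F : Type*} [Field F] (s : ℕ → F) : ℕ :=
  sInf {L | 0 < L ∧ ∃ c : Fin L → F,
    ∀ u, s (u + L) = ∑ i : Fin L, c i * s (u + L - 1 - (i : ℕ))}


lemma exists_pow_eq' (p : ℕ) (hp : p.Prime) (g x : ZMod p) (hg : orderOf g = p - 1)
    (hx : x ≠ 0) : ∃ a : ℕ, g ^ a = x := by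
  haveI : Fact p.Prime := ⟨hp⟩
  have hP1 : p - 1 ≠ 0 := by have := hp.two_le; omega
  have hgu : IsUnit g := by
    apply IsUnit.of_pow_eq_one (n := p - 1) _ hP1
    rw [← hg]; exact pow_orderOf_eq_one g
  obtain ⟨gu, hgu'⟩ := hgu
  have hord : orderOf gu = p - 1 := by rw [← orderOf_units, hgu', hg]
  have hcard : Fintype.card (ZMod p)ˣ = p - 1 := by
    rw [ZMod.card_units_eq_totient, Nat.totient_prime hp]
  obtain ⟨xu, hxu⟩ := (isUnit_iff_ne_zero).mpr hx
  have htop : Subgroup.zpowers gu = ⊤ := by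
    apply Subgroup.eq_top_of_card_eq
    rw [Nat.card_zpowers, Nat.card_eq_fintype_card, hord, hcard]
  have hmem : xu ∈ Subgroup.zpowers gu := by simp [htop]
  rw [← mem_powers_iff_mem_zpowers, Submonoid.mem_powers_iff] at hmem
  obtain ⟨a, ha⟩ := hmem
  exact ⟨a, by rw [← hgu', ← hxu, ← ha, Units.val_pow_eq_pow_val]⟩

theorem statement2
    (p q m n g y : ℕ)
    (hp : p.Prime) (hq : q.Prime) (hpq : p ≠ q) (hpodd : Odd p) (hqodd : Odd q)
    (hm : 1 ≤ m) (hn : 1 ≤ n) (hgodd : Odd g)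
    (hgp : ∀ i, 1 ≤ i → i ≤ m → orderOf (g : ZMod (p ^ i)) = Nat.totient (p ^ i))
    (hg2p : ∀ i, 1 ≤ i → i ≤ m → orderOf (g : ZMod (2 * p ^ i)) = Nat.totient (2 * p ^ i))
    (hgq : ∀ j, 1 ≤ j → j ≤ n → orderOf (g : ZMod (q ^ j)) = Nat.totient (q ^ j))
    (hg2q : ∀ j, 1 ≤ j → j ≤ n → orderOf (g : ZMod (2 * q ^ j)) = Nat.totient (2 * q ^ j))
    (hylt : y < 2 * (p ^ m * q ^ n))
    (hyg : y ≡ g [MOD 2 * p ^ m]) (hy1 : y ≡ 1 [MOD 2 * q ^ n])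
    : (2 ∈ DPQ p q g y 0 1 1) ↔ (q % 8 = 1 ∨ q % 8 = 7) := by
  haveI hFp : Fact p.Prime := ⟨hp⟩
  haveI hFq : Fact q.Prime := ⟨hq⟩
  have hp3 : 3 ≤ p := by have := hp.two_le; rcases hpodd with ⟨w, hw⟩; omega
  have hq3 : 3 ≤ q := by have := hq.two_le; rcases hqodd with ⟨w, hw⟩; omega
  have hPeven : 2 ∣ (p - 1) := by rcases hpodd with ⟨w, hw⟩; omega
  have hQeven : 2 ∣ (q - 1) := by rcases hqodd with ⟨w, hw⟩; omega
  have hgp1 := hgp 1 le_rfl hm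
  rw [pow_one, Nat.totient_prime hp] at hgp1
  have hgq1 := hgq 1 le_rfl hn
  rw [pow_one, Nat.totient_prime hq] at hgq1
  set P := p - 1 with hP
  set Q := q - 1 with hQ
  set E := Nat.gcd P Q with hE
  have hPpos : 0 < P := by omega
  have hQpos : 0 < Q := by omega
  have hEP : E ∣ P := Nat.gcd_dvd_left _ _
  have hEQ : E ∣ Q := Nat.gcd_dvd_right _ _
  have hE2 : 2 ∣ E := Nat.dvd_gcd hPeven hQeven
  have hEpos : 0 < E := Nat.gcd_pos_of_pos_left _ hPpos
  have hpdvd : p ∣ 2 * p ^ m := dvd_mul_of_dvd_right (dvd_pow_self p (by omega)) 2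
  have hqdvd : q ∣ 2 * q ^ n := dvd_mul_of_dvd_right (dvd_pow_self q (by omega)) 2
  have hyp : ((y : ℕ) : ZMod p) = ((g : ℕ) : ZMod p) :=
    (ZMod.natCast_eq_natCast_iff _ _ _).mpr (hyg.of_dvd hpdvd)
  have hyq : ((y : ℕ) : ZMod q) = 1 := by
    have := (ZMod.natCast_eq_natCast_iff y 1 q).mpr (hy1.of_dvd hqdvd)
    simpa using this
  have hmem : (2 ∈ DPQ p q g y 0 1 1) ↔
      ∃ t < dij p q 1 1 / 2, ∃ k < eij p q 1 1, g ^ (2*t) * y ^ k % (p*q) = 2 := by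
    simp only [DPQ, GC, if_pos rfl, GC0, Finset.mem_image, Finset.mem_product, mem_range,
      Prod.exists, pow_one, ite_true]
    constructor
    · rintro ⟨t, k, ⟨ht, hk⟩, he⟩; exact ⟨t, ht, k, hk, he⟩
    · rintro ⟨t, ht, k, hk, he⟩; exact ⟨t, k, ⟨ht, hk⟩, he⟩
  have heijv : eij p q 1 1 = E := by simp [eij, hE, hP, hQ]
  have hdijv : dij p q 1 1 = P * Q / E := by simp [dij, eij, hE, hP, hQ]
  have hpqgt : 2 < p * q := by nlinarith
  have hcop : Nat.Coprime p q := (Nat.coprime_primes hp hq).mpr hpq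
  rw [hmem]
  constructor
  · rintro ⟨t, ht, k, hk, heq⟩
    have hmodpq : g ^ (2*t) * y ^ k ≡ 2 [MOD p*q] := by
      show _ % _ = _ % _
      rw [heq, Nat.mod_eq_of_lt hpqgt]
    have hmodq := hmodpq.of_dvd (dvd_mul_left q p)
    have hzq : ((g:ℕ) : ZMod q) ^ (2*t) * ((y:ℕ) : ZMod q) ^ k = 2 := by
      have := (ZMod.natCast_eq_natCast_iff _ _ _).mpr hmodq
      push_cast at this
      exact this
    rw [hyq, one_pow, mul_one] at hzq
    have hsq : IsSquare (2 : ZMod q) := ⟨((g:ℕ) : ZMod q) ^ t, by rw [← hzq, two_mul, pow_add]⟩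
    exact (ZMod.exists_sq_eq_two_iff (by omega)).mp hsq
  · intro hq8
    have hsq : IsSquare (2 : ZMod q) := (ZMod.exists_sq_eq_two_iff (by omega : q ≠ 2)).mpr hq8
    have h2zp : (2 : ZMod p) ≠ 0 := by
      have h2 : ((2:ℕ) : ZMod p) ≠ 0 := by
        rw [Ne, ZMod.natCast_eq_zero_iff]
        intro hd; have := Nat.le_of_dvd (by norm_num) hd; omega
      simpa using h2
    have h2zq : (2 : ZMod q) ≠ 0 := by
      have h2 : ((2:ℕ) : ZMod q) ≠ 0 := by
        rw [Ne, ZMod.natCast_eq_zero_iff]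
        intro hd; have := Nat.le_of_dvd (by norm_num) hd; omega
      simpa using h2
    obtain ⟨a, ha⟩ := exists_pow_eq' p hp ((g:ℕ) : ZMod p) (2 : ZMod p) hgp1 h2zp
    obtain ⟨x, hx2⟩ := hsq
    have hxne : x ≠ 0 := by
      rintro rfl; rw [mul_zero] at hx2; exact h2zq hx2
    obtain ⟨c, hc⟩ := exists_pow_eq' q hq ((g:ℕ) : ZMod q) x hgq1 hxne
    have hgc : ((g:ℕ) : ZMod q) ^ (2*c) = 2 := by
      rw [mul_comm 2 c, pow_mul, hc, sq, ← hx2]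
    -- construction of t and k
    set a' := a + P * E with ha'
    set k := (a + 2*c*(E-1)) % E with hkdef
    have hkE : k < E := Nat.mod_lt _ hEpos
    have hka' : k ≤ a' := by
      have : E ≤ P * E := Nat.le_mul_of_pos_left E hPpos
      omega
    have hcong1 : k + 2*c ≡ a' [MOD E] := by
      have h1 : k ≡ a + 2*c*(E-1) [MOD E] := Nat.mod_modEq _ E
      have h2 : k + 2*c ≡ a + 2*c*E [MOD E] := by
        have h2' := h1.add_right (2*c)
        have heq2 : a + 2*c*(E-1) + 2*c = a + 2*c*E := by
          have hE1 : E - 1 + 1 = E := by omega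
          calc a + 2*c*(E-1) + 2*c = a + 2*c*((E-1)+1) := by ring
          _ = a + 2*c*E := by rw [hE1]
        rwa [heq2] at h2'
      have h3 : a + 2*c*E ≡ a' [MOD E] := by
        have d1 : a + 2*c*E ≡ a + 0 [MOD E] :=
          Nat.ModEq.add_left a ((Nat.modEq_zero_iff_dvd).mpr ⟨2*c, mul_comm _ _⟩)
        have d2 : a + P*E ≡ a + 0 [MOD E] :=
          Nat.ModEq.add_left a ((Nat.modEq_zero_iff_dvd).mpr ⟨P, mul_comm _ _⟩)
        have d1' : a + 2*c*E ≡ a [MOD E] := by simpa using d1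
        have d2' : a + P*E ≡ a [MOD E] := by simpa using d2
        exact d1'.trans d2'.symm
      exact h2.trans h3
    set A := a' - k with hAdef
    have hAk : k + A = a' := by omega
    have hA2c : A ≡ 2*c [MOD E] :=
      Nat.ModEq.add_left_cancel' k (by rw [hAk]; exact hcong1.symm)
    have hAeven : 2 ∣ A := by
      have h0 : A % 2 = (2*c) % 2 := hA2c.of_dvd hE2
      omega
    obtain ⟨A2, hA2⟩ := hAeven
    obtain ⟨P2, hP2⟩ := hPeven
    obtain ⟨Q2, hQ2⟩ := hQeven
    obtain ⟨QE, hQE⟩ := hEQ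
    obtain ⟨PE, hPE⟩ := hEP
    have hQEpos : 0 < QE := by
      rcases Nat.eq_zero_or_pos QE with h | h
      · subst h; rw [mul_zero] at hQE; omega
      · exact h
    have hPEpos : 0 < PE := by
      rcases Nat.eq_zero_or_pos PE with h | h
      · subst h; rw [mul_zero] at hPE; omega
      · exact h
    have key1 : P * Q = 2*(P2*QE) * E := by rw [hP2, hQE]; ring
    have key2 : P * Q = 2*(Q2*PE) * E := by rw [hQ2, hPE]; ring
    have hD2a : dij p q 1 1 / 2 = P2*QE := by
      rw [hdijv, key1, Nat.mul_div_cancel _ hEpos, Nat.mul_div_cancel_left _ (by norm_num)]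
    have hD2b : dij p q 1 1 / 2 = Q2*PE := by
      rw [hdijv, key2, Nat.mul_div_cancel _ hEpos, Nat.mul_div_cancel_left _ (by norm_num)]
    have hEE2 : E = 2 * Nat.gcd P2 Q2 := by
      rw [hE, hP2, hQ2, Nat.gcd_mul_left]
    have hcrt : A2 ≡ c [MOD Nat.gcd P2 Q2] := by
      apply Nat.ModEq.mul_left_cancel' (by norm_num : (2:ℕ) ≠ 0)
      rw [← hA2, ← hEE2]
      exact hA2c
    obtain ⟨T, hT1, hT2⟩ := Nat.chineseRemainder' hcrt
    have hD2pos : 0 < dij p q 1 1 / 2 := by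
      rw [hD2a]; exact Nat.mul_pos (by omega) hQEpos
    set t := T % (dij p q 1 1 / 2) with htdef
    have htD2 : t < dij p q 1 1 / 2 := Nat.mod_lt _ hD2pos
    have ht1 : t ≡ A2 [MOD P2] := ((Nat.mod_modEq T _).of_dvd ⟨QE, hD2a⟩).trans hT1
    have ht2 : t ≡ c [MOD Q2] := ((Nat.mod_modEq T _).of_dvd ⟨PE, hD2b⟩).trans hT2
    have h2tP : 2*t ≡ A [MOD P] := by
      have h := Nat.ModEq.mul_left' 2 ht1
      rwa [← hA2, ← hP2] at h
    have h2tQ : 2*t ≡ 2*c [MOD Q] := by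
      have h := Nat.ModEq.mul_left' 2 ht2
      rwa [← hQ2] at h
    have hexpP : (2*t + k) ≡ a [MOD P] := by
      have h4 : 2*t + k ≡ A + k [MOD P] := h2tP.add_right k
      have h5 : A + k = a + P*E := by omega
      have h6 : a + P*E ≡ a [MOD P] := by
        have d1 : a + P*E ≡ a + 0 [MOD P] :=
          Nat.ModEq.add_left a ((Nat.modEq_zero_iff_dvd).mpr ⟨E, rfl⟩)
        simpa using d1
      calc 2*t + k ≡ A + k [MOD P] := h4
        _ = a + P*E := h5
        _ ≡ a [MOD P] := h6
    have hmodp : ((g ^ (2*t) * y ^ k : ℕ) : ZMod p) = ((2:ℕ) : ZMod p) := by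
      push_cast
      rw [hyp, ← pow_add, ← ha]
      rw [← pow_mod_orderOf, hgp1, hexpP, ← hgp1, pow_mod_orderOf]
    have hmodq : ((g ^ (2*t) * y ^ k : ℕ) : ZMod q) = ((2:ℕ) : ZMod q) := by
      push_cast
      rw [hyq, one_pow, mul_one, ← hgc]
      rw [← pow_mod_orderOf, hgq1, h2tQ, ← hgq1, pow_mod_orderOf]
    have hfin : g ^ (2*t) * y ^ k ≡ 2 [MOD p*q] :=
      (Nat.modEq_and_modEq_iff_modEq_mul hcop).mp
        ⟨(ZMod.natCast_eq_natCast_iff _ _ _).mp hmodp,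
         (ZMod.natCast_eq_natCast_iff _ _ _).mp hmodq⟩
    refine ⟨t, htD2, k, by rw [heijv]; exact hkE, ?_⟩
    have : g ^ (2*t) * y ^ k % (p*q) = 2 % (p*q) := hfin
    rwa [Nat.mod_eq_of_lt hpqgt] at this


end
end

section
/- 2 ∈ D_1^{(pq)} if and only if q ≡ ±3 (mod 8). -/
open Finset Polynomial

noncomputable section

/-!
Modulo `p` we have `y ≡ g` and modulo `q` we have `y ≡ 1`, so `g^(2t+1) y^k ≡ 2 (mod pq)` says
`g^(2t+1+k) = 2` in `𝔽_p` and `g^(2t+1) = 2` in `𝔽_q`. The second condition makes `2` an odd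
power of a primitive root, i.e. a non-square in `𝔽_q`, which by the second supplement to quadratic
reciprocity means `q ≡ ±3 (mod 8)`. Conversely, take discrete logarithms `a` of `2` in `𝔽_p` and
`b` (necessarily odd) in `𝔽_q`; the Chinese remainder theorem for the non-coprime moduli `p - 1`,
`q - 1` yields `s < lcm(p-1, q-1)` and `k < gcd(p-1, q-1)` with `s ≡ b (mod q-1)` and
`s + k ≡ a (mod p-1)`, and `s` is odd because `q - 1` is even.
-/

lemma exists_lt_lcm_modEq_add_modEq {P Q : ℕ} (hP : P ≠ 0) (hQ : Q ≠ 0) (a b : ℕ) :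
    ∃ s < Nat.lcm P Q, ∃ k < Nat.gcd P Q, s ≡ b [MOD Q] ∧ s + k ≡ a [MOD P] := by
  have : NeZero (Nat.gcd P Q) := ⟨Nat.gcd_ne_zero_left hP⟩
  set k := ((a : ZMod (Nat.gcd P Q)) - b).val with hk_def
  have hk : k < Nat.gcd P Q := ZMod.val_lt _
  have hbk : b + k ≡ a [MOD Nat.gcd P Q] := by
    rw [← ZMod.natCast_eq_natCast_iff]
    push_cast [hk_def, ZMod.natCast_zmod_val]
    ring
  have hkP : k ≤ P := hk.le.trans (Nat.gcd_le_left Q (Nat.pos_of_ne_zero hP))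
  -- shifting by `P - k` turns the condition on `s + k` into a plain congruence for `s`
  have hcompat : a + (P - k) ≡ b [MOD Nat.gcd P Q] := by
    refine Nat.ModEq.add_right_cancel' k ?_
    calc a + (P - k) + k = a + P := by omega
      _ ≡ a + 0 [MOD Nat.gcd P Q] :=
          Nat.ModEq.add_left a (Nat.modEq_zero_iff_dvd.2 (Nat.gcd_dvd_left P Q))
      _ ≡ b + k [MOD Nat.gcd P Q] := hbk.symm
  refine ⟨Nat.chineseRemainder' hcompat, Nat.chineseRemainder'_lt_lcm hcompat hP hQ, k, hk,
    (Nat.chineseRemainder' hcompat).2.2, ?_⟩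
  calc _ ≡ a + (P - k) + k [MOD P] := (Nat.chineseRemainder' hcompat).2.1.add_right k
    _ = a + P := by omega
    _ ≡ a [MOD P] := Nat.add_modEq_right

lemma exists_lt_half_lcm_odd_modEq {P Q : ℕ} (hP : P ≠ 0) (hQ : Q ≠ 0) (hQ2 : 2 ∣ Q)
    (a : ℕ) {b : ℕ} (hb : Odd b) :
    ∃ t < Nat.lcm P Q / 2, ∃ k < Nat.gcd P Q,
      2 * t + 1 ≡ b [MOD Q] ∧ 2 * t + 1 + k ≡ a [MOD P] := by
  obtain ⟨s, hs, k, hk, hsb, hska⟩ := exists_lt_lcm_modEq_add_modEq hP hQ a b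
  have hs_odd : s % 2 = 1 := by rw [hsb.of_dvd hQ2, ← Nat.odd_iff]; exact hb
  have hlcm_even : 2 ∣ Nat.lcm P Q := hQ2.trans (Nat.dvd_lcm_right P Q)
  have hs_eq : 2 * (s / 2) + 1 = s := by omega
  refine ⟨s / 2, by omega, k, hk, ?_⟩
  rw [hs_eq]
  exact ⟨hsb, hska⟩

namespace ZMod

variable {q : ℕ} [Fact q.Prime] {g : ZMod q}

lemma two_ne_zero_of_ne_two (hq : q ≠ 2) : (2 : ZMod q) ≠ 0 :=
  Ring.two_ne_zero (by rwa [ringChar_zmod_n])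

lemma not_isSquare_two_iff (hq : q ≠ 2) :
    ¬ IsSquare (2 : ZMod q) ↔ q % 8 = 3 ∨ q % 8 = 5 := by
  have := (Fact.out : q.Prime).eq_two_or_odd.resolve_left hq
  rw [exists_sq_eq_two_iff hq]
  omega

lemma exists_pow_eq_of_orderOf_eq (hg : orderOf g = q - 1) {x : ZMod q} (hx : x ≠ 0) :
    ∃ b, g ^ b = x := by
  have : NeZero (q - 1) := ⟨by have := (Fact.out : q.Prime).two_le; omega⟩
  obtain ⟨b, -, hb⟩ :=
    (IsPrimitiveRoot.iff_orderOf.2 hg).eq_pow_of_pow_eq_one (pow_card_sub_one_eq_one hx)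
  exact ⟨b, hb⟩

lemma isSquare_pow_iff_even (hq : q ≠ 2) (hg : orderOf g = q - 1) (s : ℕ) :
    IsSquare (g ^ s) ↔ Even s := by
  refine ⟨fun hsq => ?_, fun hs => hs.isSquare_pow g⟩
  have hq_odd := (Fact.out : q.Prime).eq_two_or_odd.resolve_left hq
  have hq_two_le := (Fact.out : q.Prime).two_le
  have hg0 : g ≠ 0 := by
    rintro rfl
    have := pow_orderOf_eq_one (0 : ZMod q)
    rw [hg, zero_pow (show q - 1 ≠ 0 by omega)] at this
    exact zero_ne_one this
  rw [euler_criterion q (pow_ne_zero s hg0), ← pow_mul, ← orderOf_dvd_iff_pow_eq_one, hg] at hsq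
  rw [even_iff_two_dvd]
  refine Nat.dvd_of_mul_dvd_mul_right (by omega : 0 < q / 2) ?_
  rwa [show q - 1 = 2 * (q / 2) by omega] at hsq

end ZMod

lemma mem_GC1_iff_modEq {g y M dHalf e x : ℕ} (hx : x < M) :
    x ∈ GC1 g y M dHalf e ↔
      ∃ t < dHalf, ∃ k < e, g ^ (2 * t + 1) * y ^ k ≡ x [MOD M] := by
  simp only [GC1, GC0, Finset.mem_image, Finset.mem_product, Finset.mem_range, Prod.exists]
  constructor
  · rintro ⟨_, ⟨t, k, ⟨ht, hk⟩, rfl⟩, hgx⟩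
    refine ⟨t, ht, k, hk, ?_⟩
    rw [Nat.ModEq, Nat.mod_eq_of_lt hx, ← hgx, Nat.mul_mod_mod]
    ring_nf
  · rintro ⟨t, ht, k, hk, hgx⟩
    refine ⟨_, ⟨t, k, ⟨ht, hk⟩, rfl⟩, ?_⟩
    rw [Nat.mul_mod_mod, ← Nat.mod_eq_of_lt hx, ← hgx]
    ring_nf

lemma DPQ_one_one_one (p q g y : ℕ) :
    DPQ p q g y 1 1 1 =
      GC1 g y (p * q) (Nat.lcm (p - 1) (q - 1) / 2) (Nat.gcd (p - 1) (q - 1)) := by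
  simp [DPQ, GC, dij, eij, Nat.lcm]

lemma pow_mul_pow_modEq_mul_iff {p q g y : ℕ} (hpq : p.Coprime q) (hyp : (y : ZMod p) = g)
    (hyq : (y : ZMod q) = 1) (s k x : ℕ) :
    g ^ s * y ^ k ≡ x [MOD p * q] ↔ (g : ZMod p) ^ (s + k) = x ∧ (g : ZMod q) ^ s = x := by
  rw [← Nat.modEq_and_modEq_iff_modEq_mul hpq, ← ZMod.natCast_eq_natCast_iff,
    ← ZMod.natCast_eq_natCast_iff]
  push_cast
  rw [hyp, hyq, one_pow, mul_one, pow_add]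

lemma orderOf_natCast_eq_sub_one {p m g : ℕ} (hp : p.Prime) (hm : 1 ≤ m)
    (hg : ∀ i, 1 ≤ i → i ≤ m → orderOf (g : ZMod (p ^ i)) = Nat.totient (p ^ i)) :
    orderOf (g : ZMod p) = p - 1 := by
  have h := hg 1 le_rfl hm
  rw [pow_one] at h
  rw [h, Nat.totient_prime hp]

lemma natCast_eq_of_modEq_two_mul_pow {p m y z : ℕ} (hm : 1 ≤ m) (h : y ≡ z [MOD 2 * p ^ m]) :
    (y : ZMod p) = z :=
  (ZMod.natCast_eq_natCast_iff _ _ _).2 <| h.of_dvd (Dvd.dvd.mul_left (dvd_pow_self p (by omega)) 2)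

theorem statement3_general
    (p q m n g y : ℕ)
    (hp : p.Prime) (hq : q.Prime) (hpq : p ≠ q) (hpodd : Odd p) (hqodd : Odd q)
    (hm : 1 ≤ m) (hn : 1 ≤ n)
    (hgp : ∀ i, 1 ≤ i → i ≤ m → orderOf (g : ZMod (p ^ i)) = Nat.totient (p ^ i))
    (hgq : ∀ j, 1 ≤ j → j ≤ n → orderOf (g : ZMod (q ^ j)) = Nat.totient (q ^ j))
    (hyg : y ≡ g [MOD 2 * p ^ m]) (hy1 : y ≡ 1 [MOD 2 * q ^ n])
    : (2 ∈ DPQ p q g y 1 1 1) ↔ (q % 8 = 3 ∨ q % 8 = 5) := by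
  have := Fact.mk hp
  have := Fact.mk hq
  have hp2 : p ≠ 2 := by rintro rfl; exact absurd hpodd (by decide)
  have hq2 : q ≠ 2 := by rintro rfl; exact absurd hqodd (by decide)
  have hgp1 := orderOf_natCast_eq_sub_one hp hm hgp
  have hgq1 := orderOf_natCast_eq_sub_one hq hn hgq
  have hyq : (y : ZMod q) = 1 := by simpa using natCast_eq_of_modEq_two_mul_pow hn hy1
  have := hp.two_le
  have := hq.two_le
  rw [DPQ_one_one_one, mem_GC1_iff_modEq (by nlinarith)]
  simp_rw [pow_mul_pow_modEq_mul_iff ((Nat.coprime_primes hp hq).2 hpq)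
    (natCast_eq_of_modEq_two_mul_pow hm hyg) hyq, Nat.cast_ofNat]
  constructor
  · rintro ⟨t, -, k, -, -, hgt⟩
    rw [← ZMod.not_isSquare_two_iff hq2, ← hgt, ZMod.isSquare_pow_iff_even hq2 hgq1,
      Nat.not_even_iff_odd]
    exact odd_two_mul_add_one t
  · intro hq8
    obtain ⟨a, ha⟩ := ZMod.exists_pow_eq_of_orderOf_eq hgp1 (ZMod.two_ne_zero_of_ne_two hp2)
    obtain ⟨b, hb⟩ := ZMod.exists_pow_eq_of_orderOf_eq hgq1 (ZMod.two_ne_zero_of_ne_two hq2)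
    have hb_odd : Odd b := by
      rwa [← Nat.not_even_iff_odd, ← ZMod.isSquare_pow_iff_even hq2 hgq1, hb,
        ZMod.not_isSquare_two_iff hq2]
    have hq_even : 2 ∣ q - 1 := by have := Nat.odd_iff.1 hqodd; omega
    obtain ⟨t, ht, k, hk, htb, htka⟩ :=
      exists_lt_half_lcm_odd_modEq (P := p - 1) (by omega) (by omega) hq_even a hb_odd
    refine ⟨t, ht, k, hk, ?_, ?_⟩
    · rw [← ha]; exact pow_eq_pow_of_modEq htka (hgp1 ▸ pow_orderOf_eq_one _)
    · rw [← hb]; exact pow_eq_pow_of_modEq htb (hgq1 ▸ pow_orderOf_eq_one _)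

theorem statement3
    (p q m n g y : ℕ)
    (hp : p.Prime) (hq : q.Prime) (hpq : p ≠ q) (hpodd : Odd p) (hqodd : Odd q)
    (hm : 1 ≤ m) (hn : 1 ≤ n) (hgodd : Odd g)
    (hgp : ∀ i, 1 ≤ i → i ≤ m → orderOf (g : ZMod (p ^ i)) = Nat.totient (p ^ i))
    (hg2p : ∀ i, 1 ≤ i → i ≤ m → orderOf (g : ZMod (2 * p ^ i)) = Nat.totient (2 * p ^ i))
    (hgq : ∀ j, 1 ≤ j → j ≤ n → orderOf (g : ZMod (q ^ j)) = Nat.totient (q ^ j))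
    (hg2q : ∀ j, 1 ≤ j → j ≤ n → orderOf (g : ZMod (2 * q ^ j)) = Nat.totient (2 * q ^ j))
    (hylt : y < 2 * (p ^ m * q ^ n))
    (hyg : y ≡ g [MOD 2 * p ^ m]) (hy1 : y ≡ 1 [MOD 2 * q ^ n])
    : (2 ∈ DPQ p q g y 1 1 1) ↔ (q % 8 = 3 ∨ q % 8 = 5) :=
  statement3_general p q m n g y hp hq hpq hpodd hqodd hm hn hgp hgq hyg hy1

end
end

section
/- Let k = p^a q^b l with gcd(l, pq) = 1, 0 ≤ a ≤ m−1, 0 ≤ b ≤ n−1, and set ζ_{pq} = β^{p^{m−1} q^{n−1}} (a primitive pq-th root of unity). Then for all 1 ≤ i ≤ m and 1 ≤ j ≤ n: S_0^{(i,j)}(β^k) = (p−1)(q−1)p^{i−1}q^{j−1}/2 (as an element of F_{4^{d*}}) if i ≤ a and j ≤ b; S_0^{(i,j)}(β^k) = Σ_{t ∈ D_0^{(pq)}} ζ_{pq}^{lt} if i = a+1 and j = b+1; S_0^{(i,j)}(β^k) = 0 if i > a+1 or j > b+1; S_0^{(i,j)}(β^k) = 0 if i ≤ a and j = b+1; and S_0^{(i,j)}(β^k)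 = (q−1)/2 (as an element of F_{4^{d*}}) if i = a+1 and j ≤ b. -/
open Finset Polynomial

noncomputable section

section GYHelpers

set_option maxHeartbeats 1600000

section CycHelpers
variable {K : Type*} [Field K]

lemma cyc_pow_mod (ω : K) {M : ℕ} (h1 : ω ^ M = 1) (x : ℕ) : ω ^ x = ω ^ (x % M) := by
  conv_lhs => rw [← Nat.div_add_mod x M]
  rw [pow_add, pow_mul, h1, one_pow, one_mul]

lemma cyc_pow_congr (ω : K) {M : ℕ} (h1 : ω ^ M = 1) {x y : ℕ} (h : x ≡ y [MOD M]) :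
    ω ^ x = ω ^ y := by
  rw [cyc_pow_mod ω h1 x, cyc_pow_mod ω h1 y, h]

lemma cyc_geom_zero {ω : K} {M : ℕ} (h0 : ω ≠ 1) (h1 : ω ^ M = 1) :
    ∑ x ∈ range M, ω ^ x = 0 := by
  rw [geom_sum_eq h0, h1, sub_self, zero_div]

lemma sum_grid (f : ℕ → K) (r c : ℕ) :
    ∑ u ∈ range (r * c), f u = ∑ k ∈ range r, ∑ v ∈ range c, f (k * c + v) := by
  induction r with
  | zero => simp
  | succ r ih =>
    have h1 : (r + 1) * c = r * c + c := by ring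
    rw [h1, Finset.range_eq_Ico, ← Finset.sum_Ico_consecutive f (Nat.zero_le (r*c))
      (Nat.le_add_right _ _), ← Finset.range_eq_Ico, ih, Finset.sum_range_succ]
    congr 1
    rw [Finset.sum_Ico_eq_sum_range]
    simp [add_comm]

omit [Field K] in
lemma periodic_add {f : ℕ → K} {c : ℕ} (hf : ∀ v, f (v + c) = f v) :
    ∀ k v, f (k * c + v) = f v := by
  intro k
  induction k with
  | zero => simp
  | succ k ih =>
    intro v
    have h : (k + 1) * c + v = (k * c + v) + c := by ring
    rw [h, hf, ih]

lemma sum_block (f : ℕ → K) (r c : ℕ) (hf : ∀ v, f (v + c) = f v) :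
    ∑ v ∈ range (r * c), f v = (r : K) * ∑ v ∈ range c, f v := by
  rw [sum_grid]
  have h : ∀ k ∈ range r, ∑ v ∈ range c, f (k * c + v) = ∑ v ∈ range c, f v := by
    intro k _
    exact Finset.sum_congr rfl fun v _ => periodic_add hf k v
  rw [Finset.sum_congr rfl h, Finset.sum_const, Finset.card_range, nsmul_eq_mul]

lemma char_two_of_card (d : ℕ) [Fintype K] (hK : Fintype.card K = 4 ^ d) : (2 : K) = 0 := by
  have h4 : ((4 ^ d : ℕ) : K) = 0 := by rw [← hK]; exact FiniteField.cast_card_eq_zero K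
  have hd : d ≠ 0 := by
    rintro rfl
    rw [pow_zero] at hK
    have := Fintype.one_lt_card (α := K)
    omega
  have h4' : ((4 : ℕ) : K) ^ d = 0 := by push_cast at h4 ⊢; exact h4
  have h40 : ((4 : ℕ) : K) = 0 := pow_eq_zero_iff hd |>.mp h4'
  have hmul : (2 : K) * 2 = 0 := by
    have h42 : ((4 : ℕ) : K) = (2 : K) * 2 := by norm_num
    rw [← h42, h40]
  rcases mul_eq_zero.mp hmul with h | h <;> exact h

lemma even_cast_eq_zero (h2 : (2 : K) = 0) {c : ℕ} (hc : Even c) : (c : K) = 0 := by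
  obtain ⟨k, rfl⟩ := hc
  push_cast
  have h : (k : K) + k = 2 * k := by ring
  rw [h, h2, zero_mul]

lemma odd_cast_eq_one (h2 : (2 : K) = 0) {c : ℕ} (hc : Odd c) : (c : K) = 1 := by
  obtain ⟨k, rfl⟩ := hc
  push_cast
  have h : 2 * (k : K) + 1 = (2 : K) * k + 1 := by ring
  rw [h, h2, zero_mul, zero_add]

end CycHelpers

lemma one_add_pow_modEq (x k M : ℕ) (hM : M ∣ x * x) :
    (1 + x) ^ k ≡ 1 + k * x [MOD M] := by
  induction k with
  | zero => simp [Nat.ModEq.refl]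
  | succ k ih =>
    have h1 : (1 + x) ^ (k + 1) = (1 + x) ^ k * (1 + x) := by ring
    have h2 : (1 + k * x) * (1 + x) = 1 + (k + 1) * x + k * (x * x) := by ring
    calc (1 + x) ^ (k + 1) = (1 + x) ^ k * (1 + x) := h1
      _ ≡ (1 + k * x) * (1 + x) [MOD M] := ih.mul_right _
      _ = 1 + (k + 1) * x + k * (x * x) := h2
      _ ≡ 1 + (k + 1) * x + k * 0 [MOD M] :=
          Nat.ModEq.add_left _ (Nat.ModEq.mul_left k ((Nat.modEq_zero_iff_dvd).mpr hM))
      _ = 1 + (k + 1) * x := by ring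

lemma int_eq_zero_of_dvd_of_abs_lt {e x : ℤ} (he : 0 < e) (hd : e ∣ x) (hx : |x| < e) : x = 0 := by
  obtain ⟨w, rfl⟩ := hd
  rcases lt_trichotomy w 0 with h | h | h
  · nlinarith [abs_nonneg (e * w), le_abs_self (e * w), neg_abs_le (e * w)]
  · simp [h]
  · nlinarith [le_abs_self (e * w)]

lemma inj_arith {a b : ℕ} (ha : 0 < a) (hb : 0 < b) (hae : Even a) (hbe : Even b)
    {t t' s s' : ℕ}
    (ht : t < a * b / Nat.gcd a b / 2) (ht' : t' < a * b / Nat.gcd a b / 2)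
    (hs : s < Nat.gcd a b) (hs' : s' < Nat.gcd a b)
    (h1 : 2 * t + s ≡ 2 * t' + s' [MOD a]) (h2 : 2 * t ≡ 2 * t' [MOD b]) :
    t = t' ∧ s = s' := by
  obtain ⟨e, he⟩ : ∃ e, Nat.gcd a b = e := ⟨_, rfl⟩
  rw [he] at ht ht' hs hs'
  have hepos : 0 < e := he ▸ Nat.gcd_pos_of_pos_left _ ha
  obtain ⟨b2, hb2⟩ : ∃ b2, b = 2 * b2 := by obtain ⟨k, hk⟩ := hbe; exact ⟨k, by omega⟩
  obtain ⟨a1, ha1⟩ : e ∣ a := he ▸ Nat.gcd_dvd_left a b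
  obtain ⟨b1, hb1⟩ : e ∣ b := he ▸ Nat.gcd_dvd_right a b
  have hco : Nat.Coprime a1 b1 := by
    have hccc := Nat.coprime_div_gcd_div_gcd (m := a) (n := b) (he ▸ hepos)
    have hda : a / Nat.gcd a b = a1 := by rw [he, ha1]; exact Nat.mul_div_cancel_left _ hepos
    have hdb : b / Nat.gcd a b = b1 := by rw [he, hb1]; exact Nat.mul_div_cancel_left _ hepos
    rwa [hda, hdb] at hccc
  have ha1pos : 0 < a1 := by
    rcases Nat.eq_zero_or_pos a1 with h|h
    · subst h; simp at ha1; omega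
    · exact h
  have hb2pos : 0 < b2 := by omega
  have hbound : a * b / e / 2 = a1 * b2 := by
    have hh : a * b = e * (2 * (a1 * b2)) := by rw [ha1, hb2]; ring
    rw [hh, Nat.mul_div_cancel_left _ hepos, Nat.mul_div_cancel_left _ (by norm_num)]
  rw [hbound] at ht ht'
  -- pass to ℤ
  have d2 : (b2 : ℤ) ∣ (t' : ℤ) - t := by
    have hd := h2.dvd
    have hb2' : (b : ℤ) = 2 * b2 := by exact_mod_cast hb2
    rw [hb2'] at hd
    have : (2 : ℤ) * b2 ∣ 2 * ((t' : ℤ) - t) := by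
      convert hd using 1; push_cast; ring
    exact (mul_dvd_mul_iff_left (by norm_num : (2:ℤ) ≠ 0)).mp this
  obtain ⟨u, hu⟩ := d2
  have d1 : (a : ℤ) ∣ (b : ℤ) * u + ((s' : ℤ) - s) := by
    have hd := h1.dvd
    convert hd using 1
    push_cast
    rw [hb2]
    push_cast
    linarith [hu]
  have hss : (s' : ℤ) - s = 0 := by
    have hed : (e : ℤ) ∣ (s' : ℤ) - s := by
      have h1' : (e : ℤ) ∣ a := ⟨a1, by exact_mod_cast ha1⟩
      have h2' : (e : ℤ) ∣ (b : ℤ) * u :=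
        Dvd.dvd.mul_right (⟨b1, by exact_mod_cast hb1⟩ : (e:ℤ) ∣ b) u
      have := (dvd_sub (h1'.trans d1) h2')
      simpa using this
    exact int_eq_zero_of_dvd_of_abs_lt (by exact_mod_cast hepos) hed
      (by rw [abs_sub_lt_iff]; constructor <;> [skip; skip] <;> push_cast <;> omega)
  have hs_eq : s = s' := by omega
  have d1' : (a1 : ℤ) ∣ b1 * u := by
    rw [hss, add_zero] at d1
    have hA : (a : ℤ) = e * a1 := by exact_mod_cast ha1
    have hB : (b : ℤ) = e * b1 := by exact_mod_cast hb1
    rw [hA, hB, mul_assoc] at d1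
    exact (mul_dvd_mul_iff_left (by exact_mod_cast hepos.ne' : (e:ℤ) ≠ 0)).mp d1
  have hcoZ : IsCoprime (a1 : ℤ) (b1 : ℤ) := Int.isCoprime_iff_gcd_eq_one.mpr (by
    rw [Int.gcd_natCast_natCast]; exact hco)
  have d1'' : (a1 : ℤ) ∣ u := (IsCoprime.dvd_of_dvd_mul_left hcoZ d1')
  obtain ⟨w, rfl⟩ := d1''
  have htt : (t' : ℤ) - t = 0 := by
    have habs : |(t' : ℤ) - t| < a1 * b2 := by
      rw [abs_sub_lt_iff]; constructor <;> push_cast <;> omega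
    rw [hu] at habs ⊢
    have : (b2 : ℤ) * (a1 * w) = (a1 * b2) * w := by ring
    rw [this] at habs ⊢
    exact int_eq_zero_of_dvd_of_abs_lt (by positivity) ⟨w, rfl⟩ habs
  exact ⟨by omega, hs_eq⟩

lemma cyc_pow_mod' {G : Type*} [Monoid G] (ω : G) {M : ℕ} (h1 : ω ^ M = 1) (x : ℕ) :
    ω ^ x = ω ^ (x % M) := by
  conv_lhs => rw [← Nat.div_add_mod x M]
  rw [pow_add, pow_mul, h1, one_pow, one_mul]

section OrdPlumb
variable {M φ g : ℕ}

lemma coprime_of_orderOf (hord : orderOf (g : ZMod M) = φ) (hφ : 0 < φ) :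
    Nat.Coprime g M := by
  have : IsUnit (g : ZMod M) := by
    apply IsOfFinOrder.isUnit
    rw [← orderOf_pos_iff, hord]
    exact hφ
  exact (ZMod.isUnit_iff_coprime g M).mp this

lemma pow_modEq_of_modEq (hord : orderOf (g : ZMod M) = φ) {x y : ℕ}
    (h : x ≡ y [MOD φ]) : g ^ x ≡ g ^ y [MOD M] := by
  have h1 : (g : ZMod M) ^ φ = 1 := by rw [← hord]; exact pow_orderOf_eq_one _
  have : (g : ZMod M) ^ x = (g : ZMod M) ^ y := by
    rw [cyc_pow_mod' _ h1 x, cyc_pow_mod' _ h1 y, h]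
  have := this
  rwa [← Nat.cast_pow, ← Nat.cast_pow, ZMod.natCast_eq_natCast_iff] at this

lemma modEq_of_pow_modEq (hord : orderOf (g : ZMod M) = φ) (hφ : 0 < φ) {x y : ℕ}
    (h : g ^ x ≡ g ^ y [MOD M]) : x ≡ y [MOD φ] := by
  have hcop := coprime_of_orderOf hord hφ
  set u := ZMod.unitOfCoprime g hcop with hu
  have hcu : (u : ZMod M) = (g : ZMod M) := ZMod.coe_unitOfCoprime g hcop
  have hpow : u ^ x = u ^ y := by
    apply Units.ext
    push_cast [hcu]
    rwa [← Nat.cast_pow, ← Nat.cast_pow, ZMod.natCast_eq_natCast_iff]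
  have hou : orderOf u = φ := by rw [← hord, ← hcu, orderOf_units]
  rw [pow_eq_pow_iff_modEq, hou] at hpow
  exact hpow

end OrdPlumb

section SP
variable {K : Type*} [Field K]

lemma sum_pow_units (p i g : ℕ) (hp : p.Prime) (hi : 1 ≤ i)
    (hord : orderOf (g : ZMod (p ^ i)) = p ^ (i - 1) * (p - 1))
    (η : K) (hη : η ^ (p ^ i) = 1) :
    ∑ u ∈ range (p ^ (i - 1) * (p - 1)), η ^ (g ^ u)
      = (∑ x ∈ range (p ^ i), η ^ x) - ∑ x ∈ range (p ^ (i - 1)), (η ^ p) ^ x := by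
  have hp1 := hp.one_lt
  have hφpos : 0 < p ^ (i - 1) * (p - 1) :=
    Nat.mul_pos (pow_pos (by omega) _) (by omega)
  have hcop : Nat.Coprime g (p ^ i) := coprime_of_orderOf hord hφpos
  have hpg : ¬ p ∣ g := by
    intro hdvd
    have h1 : p ∣ Nat.gcd g (p ^ i) := Nat.dvd_gcd hdvd (dvd_pow_self p (by omega))
    rw [hcop] at h1
    have := Nat.le_of_dvd one_pos h1
    omega
  have hinj : ∀ u ∈ range (p ^ (i - 1) * (p - 1)), ∀ u' ∈ range (p ^ (i - 1) * (p - 1)),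
      g ^ u % p ^ i = g ^ u' % p ^ i → u = u' := by
    intro u hu u' hu' h
    simp only [mem_range] at hu hu'
    have hm : g ^ u ≡ g ^ u' [MOD p ^ i] := h
    have := modEq_of_pow_modEq hord hφpos hm
    unfold Nat.ModEq at this
    rwa [Nat.mod_eq_of_lt hu, Nat.mod_eq_of_lt hu'] at this
  have himg : (range (p ^ (i - 1) * (p - 1))).image (fun u => g ^ u % p ^ i)
      = (range (p ^ i)).filter (fun x => ¬ p ∣ x) := by
    apply Finset.eq_of_subset_of_card_le
    · intro x hx
      simp only [mem_image, mem_range] at hx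
      obtain ⟨u, hu, rfl⟩ := hx
      simp only [mem_filter, mem_range]
      refine ⟨Nat.mod_lt _ (by positivity), ?_⟩
      intro hdvd
      have hpi : p ∣ p ^ i := dvd_pow_self p (by omega)
      have hgu : p ∣ g ^ u := by
        have hdm := Nat.div_add_mod (g ^ u) (p ^ i)
        rw [← hdm]
        exact Nat.dvd_add (dvd_mul_of_dvd_left hpi _) hdvd
      exact hpg (hp.dvd_of_dvd_pow hgu)
    · have hcard1 : ((range (p ^ (i - 1) * (p - 1))).image (fun u => g ^ u % p ^ i)).card
          = p ^ (i - 1) * (p - 1) := by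
        rw [Finset.card_image_of_injOn (fun a ha b hb h => hinj a ha b hb h), card_range]
      have hcard2 : ((range (p ^ i)).filter (fun x => ¬ p ∣ x)).card = p ^ (i - 1) * (p - 1) := by
        have hfe : (range (p ^ i)).filter (fun x => ¬ p ∣ x)
            = (range (p ^ i)).filter (fun a => (p ^ i).Coprime a) := by
          apply Finset.filter_congr
          intro x _
          rw [Nat.coprime_pow_left_iff (show 0 < i by omega), hp.coprime_iff_not_dvd]
        rw [hfe]
        have ht := Nat.totient_prime_pow hp (show 0 < i by omega)
        rw [← ht]
        rfl
      omega
  have hterm : ∀ u ∈ range (p ^ (i - 1) * (p - 1)), η ^ (g ^ u % p ^ i) = η ^ (g ^ u) :=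
    fun u _ => (cyc_pow_mod η hη (g ^ u)).symm
  have step1 : ∑ u ∈ range (p ^ (i - 1) * (p - 1)), η ^ (g ^ u)
      = ∑ x ∈ (range (p ^ i)).filter (fun x => ¬ p ∣ x), η ^ x := by
    rw [← himg, Finset.sum_image hinj]
    exact (Finset.sum_congr rfl hterm).symm
  have himg2 : (range (p ^ (i - 1))).image (fun x => p * x)
      = (range (p ^ i)).filter (fun x => p ∣ x) := by
    ext x
    simp only [mem_image, mem_filter, mem_range]
    have hpi : p ^ i = p * p ^ (i - 1) := by
      rw [← pow_succ']; congr 1; omega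
    constructor
    · rintro ⟨x', hx', rfl⟩
      refine ⟨?_, ⟨x', rfl⟩⟩
      rw [hpi]
      exact (Nat.mul_lt_mul_left (show 0 < p by omega)).mpr hx'
    · rintro ⟨hx, x', rfl⟩
      refine ⟨x', ?_, rfl⟩
      rw [hpi] at hx
      exact lt_of_mul_lt_mul_left hx (by omega)
  have step2 : ∑ x ∈ (range (p ^ i)).filter (fun x => p ∣ x), η ^ x
      = ∑ x ∈ range (p ^ (i - 1)), (η ^ p) ^ x := by
    rw [← himg2, Finset.sum_image (fun a _ b _ h => Nat.eq_of_mul_eq_mul_left (by omega) h)]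
    exact Finset.sum_congr rfl (fun x _ => by rw [← pow_mul])
  have hsplit := Finset.sum_filter_add_sum_filter_not (range (p ^ i)) (fun x => p ∣ x)
    (fun x => η ^ x)
  rw [step1, ← step2]
  rw [eq_sub_iff_add_eq, add_comm]
  exact hsplit
end SP
lemma SQ_deep {K : Type*} [Field K] (q g j' : ℕ) (hq : q.Prime) (hqodd : Odd q) (hj' : 2 ≤ j')
    (ord1 : orderOf (g : ZMod (q ^ j')) = q ^ (j' - 1) * (q - 1))
    (ord2 : orderOf (g : ZMod (q ^ (j' - 1))) = q ^ (j' - 2) * (q - 1))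
    (θ : K) (hθ1 : θ ^ (q ^ j') = 1) (hθ2 : θ ^ (q ^ (j' - 1)) ≠ 1) :
    ∑ v ∈ range (q ^ (j' - 1) * (q - 1) / 2), θ ^ (g ^ (2 * v)) = 0 := by
  have hq1 := hq.one_lt
  obtain ⟨r, hr⟩ : ∃ r, q - 1 = 2 * r := by
    obtain ⟨k, hk⟩ := hqodd; exact ⟨k, by omega⟩
  have hrpos : 0 < r := by omega
  set c := q ^ (j' - 2) * r with hc
  have hcpos : 0 < c := Nat.mul_pos (pow_pos (by omega) _) hrpos
  have hM : q ^ (j' - 1) * (q - 1) / 2 = q * c := by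
    rw [hr, hc]
    have h1 : q ^ (j' - 1) * (2 * r) = 2 * (q ^ (j' - 1) * r) := by ring
    rw [h1, Nat.mul_div_cancel_left _ (by norm_num)]
    have h2 : q ^ (j' - 1) = q * q ^ (j' - 2) := by
      rw [← pow_succ']; congr 1; omega
    rw [h2]; ring
  have h2c : 2 * c = q ^ (j' - 2) * (q - 1) := by rw [hc, hr]; ring
  -- order of theta is q^j'
  have hordθ : orderOf θ = q ^ j' := by
    have hd : orderOf θ ∣ q ^ j' := orderOf_dvd_iff_pow_eq_one.mpr hθ1
    obtain ⟨s, hs, hval⟩ := (Nat.dvd_prime_pow hq).mp hd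
    rcases Nat.lt_or_ge s j' with h | h
    · exfalso
      apply hθ2
      apply orderOf_dvd_iff_pow_eq_one.mp
      rw [hval]
      exact pow_dvd_pow q (by omega)
    · rw [hval]; congr 1; omega
  have hθone : ∀ x : ℕ, (θ ^ x = 1 ↔ q ^ j' ∣ x) := by
    intro x
    rw [← hordθ, orderOf_dvd_iff_pow_eq_one]
  have hqg : ¬ q ∣ g := by
    have hφpos : 0 < q ^ (j' - 1) * (q - 1) := Nat.mul_pos (pow_pos (by omega) _) (by omega)
    have hcop := coprime_of_orderOf ord1 hφpos
    intro hdvd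
    have h1 : q ∣ Nat.gcd g (q ^ j') := Nat.dvd_gcd hdvd (dvd_pow_self q (by omega))
    rw [hcop] at h1
    have := Nat.le_of_dvd one_pos h1
    omega
  -- z = g^{2c} mod q^{j'}
  have hz1 : g ^ (2 * c) ≡ 1 [MOD q ^ (j' - 1)] := by
    have : (2 : ℕ) * c ≡ 0 [MOD q ^ (j' - 2) * (q - 1)] := by
      rw [h2c]; exact (Nat.modEq_zero_iff_dvd).mpr dvd_rfl
    have := pow_modEq_of_modEq ord2 this
    simpa using this
  set R := g ^ (2 * c) % q ^ j' with hR
  have hRc : g ^ (2 * c) ≡ R [MOD q ^ j'] := (Nat.mod_modEq _ _).symm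
  have hR1 : R ≡ 1 [MOD q ^ (j' - 1)] := by
    have hdvd : q ^ (j' - 1) ∣ q ^ j' := pow_dvd_pow q (by omega)
    exact ((hRc.symm).of_dvd hdvd).trans hz1
  have hm1 : 1 < q ^ (j' - 1) := by
    calc 1 < q := hq1
      _ ≤ q ^ (j' - 1) := Nat.le_self_pow (by omega) q
  have hRpos : 1 ≤ R := by
    rcases Nat.eq_zero_or_pos R with h0 | h0
    · exfalso
      have h1 : 0 % q ^ (j' - 1) = 1 % q ^ (j' - 1) := by rw [← h0]; exact hR1
      rw [Nat.zero_mod, Nat.mod_eq_of_lt hm1] at h1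
      exact one_ne_zero h1.symm
    · exact h0
  obtain ⟨w, hw⟩ : q ^ (j' - 1) ∣ R - 1 := (Nat.modEq_iff_dvd' hRpos).mp hR1.symm
  have hRw : R = 1 + q ^ (j' - 1) * w := by omega
  have hqw : ¬ q ∣ w := by
    rintro ⟨w', rfl⟩
    have hRq : R = 1 + q ^ j' * w' := by
      rw [hRw]
      have : q ^ (j' - 1) * (q * w') = q ^ j' * w' := by
        rw [show q ^ j' = q ^ (j' - 1) * q by rw [← pow_succ]; congr 1; omega]
        ring
      rw [this]
    have hRlt : R < q ^ j' := Nat.mod_lt _ (pow_pos (by omega) _)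
    have hw0 : w' = 0 := by
      by_contra h
      have : q ^ j' ≤ q ^ j' * w' := Nat.le_mul_of_pos_right _ (by omega)
      omega
    rw [hw0, Nat.mul_zero, Nat.add_zero] at hRq
    -- R = 1, so g^{2c} ≡ 1 mod q^{j'}, so φ ∣ 2c, contradiction
    have hg2c : g ^ (2 * c) ≡ g ^ 0 [MOD q ^ j'] := by
      simpa [hRq] using hRc
    have hφpos : 0 < q ^ (j' - 1) * (q - 1) := Nat.mul_pos (pow_pos (by omega) _) (by omega)
    have := modEq_of_pow_modEq ord1 hφpos hg2c
    have hdvd : q ^ (j' - 1) * (q - 1) ∣ 2 * c := (Nat.modEq_zero_iff_dvd).mp this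
    have hle : q ^ (j' - 1) * (q - 1) ≤ 2 * c := Nat.le_of_dvd (by omega) hdvd
    rw [h2c] at hle
    have : q ^ (j' - 2) < q ^ (j' - 1) := Nat.pow_lt_pow_right (by omega) (by omega)
    have h1 : q ^ (j' - 2) * (q - 1) < q ^ (j' - 1) * (q - 1) :=
      (Nat.mul_lt_mul_right (show 0 < q - 1 by omega)).mpr this
    omega
  -- main computation
  rw [hM, sum_grid, Finset.sum_comm]
  have hterm : ∀ v ∈ range c, ∀ k ∈ range q,
      θ ^ (g ^ (2 * (k * c + v))) = θ ^ (g ^ (2 * v)) * (θ ^ (g ^ (2 * v) * w * q ^ (j' - 1))) ^ k := by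
    intro v _ k _
    have hesplit : g ^ (2 * (k * c + v)) = g ^ (2 * v) * (g ^ (2 * c)) ^ k := by
      rw [← pow_mul, ← pow_add]
      congr 1
      ring
    have hcong : g ^ (2 * v) * (g ^ (2 * c)) ^ k
        ≡ g ^ (2 * v) + (g ^ (2 * v) * w * q ^ (j' - 1)) * k [MOD q ^ j'] := by
      calc g ^ (2 * v) * (g ^ (2 * c)) ^ k
          ≡ g ^ (2 * v) * R ^ k [MOD q ^ j'] := (hRc.pow k).mul_left _
        _ = g ^ (2 * v) * (1 + q ^ (j' - 1) * w) ^ k := by rw [← hRw]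
        _ ≡ g ^ (2 * v) * (1 + k * (q ^ (j' - 1) * w)) [MOD q ^ j'] := by
            apply Nat.ModEq.mul_left
            apply one_add_pow_modEq
            have : q ^ (j' - 1) * w * (q ^ (j' - 1) * w) = q ^ (2 * (j' - 1)) * (w * w) := by
              rw [two_mul, pow_add]; ring
            rw [this]
            exact Dvd.dvd.mul_right (pow_dvd_pow q (by omega)) _
        _ = g ^ (2 * v) + (g ^ (2 * v) * w * q ^ (j' - 1)) * k := by ring
    rw [hesplit, cyc_pow_congr θ hθ1 hcong, pow_add]
    congr 1
    rw [pow_mul]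
  have hsum : ∀ v ∈ range c, ∑ k ∈ range q, θ ^ (g ^ (2 * (k * c + v))) = 0 := by
    intro v hv
    rw [Finset.sum_congr rfl (fun k hk => hterm v hv k hk), ← Finset.mul_sum]
    have hτq : (θ ^ (g ^ (2 * v) * w * q ^ (j' - 1))) ^ q = 1 := by
      rw [← pow_mul, hθone]
      have : g ^ (2 * v) * w * q ^ (j' - 1) * q = g ^ (2 * v) * w * q ^ j' := by
        rw [mul_assoc, ← pow_succ]
        congr 2
        omega
      rw [this]
      exact Dvd.dvd.mul_left dvd_rfl _
    have hτ1 : θ ^ (g ^ (2 * v) * w * q ^ (j' - 1)) ≠ 1 := by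
      intro hone
      have hdvd := (hθone _).mp hone
      have hj : q ^ j' = q ^ (j' - 1) * q := by rw [← pow_succ]; congr 1; omega
      rw [hj] at hdvd
      have : q ∣ g ^ (2 * v) * w := by
        rcases hdvd with ⟨cc, hcc⟩
        have hqpow : 0 < q ^ (j' - 1) := pow_pos (by omega) _
        have : g ^ (2 * v) * w = q * cc := by
          apply Nat.eq_of_mul_eq_mul_left hqpow
          calc q ^ (j' - 1) * (g ^ (2 * v) * w) = g ^ (2 * v) * w * q ^ (j' - 1) := by ring
            _ = q ^ (j' - 1) * q * cc := hcc
            _ = q ^ (j' - 1) * (q * cc) := by ring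
        exact ⟨cc, this⟩
      rcases (Nat.Prime.dvd_mul hq).mp this with h | h
      · exact hqg (hq.dvd_of_dvd_pow h)
      · exact hqw h
    rw [cyc_geom_zero hτ1 hτq, mul_zero]
  rw [Finset.sum_congr rfl hsum, Finset.sum_const, smul_zero]

lemma not_pow_dvd_of {p s m Y : ℕ} (hp1 : 1 < p) (hs : s < m) (hY : ¬ p ∣ Y) :
    ¬ p ^ m ∣ p ^ s * Y := by
  intro h
  have h1 : p ^ (s + 1) ∣ p ^ s * Y := (pow_dvd_pow p (by omega)).trans h
  rw [pow_succ] at h1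
  have h2 : p ∣ Y := by
    rcases h1 with ⟨w, hw⟩
    have hps : 0 < p ^ s := pow_pos (by omega) _
    refine ⟨w, Nat.eq_of_mul_eq_mul_left hps ?_⟩
    calc p ^ s * Y = p ^ s * p * w := hw
      _ = p ^ s * (p * w) := by ring
  exact hY h2

lemma SP_one {K : Type*} [Field K] (h2 : (2 : K) = 0) (p i g : ℕ) (hp : p.Prime)
    (hpodd : Odd p) (hi : 1 ≤ i)
    (ordp : orderOf (g : ZMod (p ^ i)) = p ^ (i - 1) * (p - 1))
    (η : K) (hηpi : η ^ (p ^ i) = 1) (hη1 : η ≠ 1) (hηp : η ^ p = 1) :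
    ∑ u ∈ range (p ^ (i - 1) * (p - 1)), η ^ (g ^ u) = 1 := by
  rw [sum_pow_units p i g hp hi ordp η hηpi, cyc_geom_zero hη1 hηpi, hηp]
  simp only [one_pow, Finset.sum_const, card_range, nsmul_eq_mul, mul_one]
  rw [odd_cast_eq_one h2 (hpodd.pow)]
  have hm1 : (-1 : K) = 1 := by
    have : (-1 : K) = 1 - 2 := by ring
    rw [this, h2, sub_zero]
  rw [zero_sub, hm1]

lemma SP_zero {K : Type*} [Field K] (p i g : ℕ) (hp : p.Prime) (hi : 1 ≤ i)
    (ordp : orderOf (g : ZMod (p ^ i)) = p ^ (i - 1) * (p - 1))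
    (η : K) (hηpi : η ^ (p ^ i) = 1) (hηp : η ^ p ≠ 1) :
    ∑ u ∈ range (p ^ (i - 1) * (p - 1)), η ^ (g ^ u) = 0 := by
  have hη1 : η ≠ 1 := fun h => hηp (by rw [h, one_pow])
  rw [sum_pow_units p i g hp hi ordp η hηpi, cyc_geom_zero hη1 hηpi]
  have hppow : (η ^ p) ^ (p ^ (i - 1)) = 1 := by
    rw [← pow_mul, ← pow_succ']
    have : p ^ (i - 1 + 1) = p ^ i := by congr 1; omega
    rw [this, hηpi]
  rw [cyc_geom_zero hηp hppow, sub_zero]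

lemma SQ_reduce {K : Type*} [Field K] (h2 : (2 : K) = 0) (q g jb js : ℕ) (hq1 : 1 < q)
    (hqodd : Odd q) (hjs : 1 ≤ js) (hjb : js ≤ jb)
    (ordsm : orderOf (g : ZMod (q ^ js)) = q ^ (js - 1) * (q - 1))
    (θ : K) (hθ : θ ^ (q ^ js) = 1) :
    ∑ v ∈ range (q ^ (jb - 1) * (q - 1) / 2), θ ^ (g ^ (2 * v))
      = ∑ v ∈ range (q ^ (js - 1) * (q - 1) / 2), θ ^ (g ^ (2 * v)) := by
  obtain ⟨R, hR⟩ : ∃ R, q - 1 = 2 * R := by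
    obtain ⟨x, hx⟩ := hqodd; exact ⟨x, by omega⟩
  set c := q ^ (js - 1) * (q - 1) / 2 with hc
  have hcR : c = q ^ (js - 1) * R := by
    rw [hc, hR]
    have : q ^ (js - 1) * (2 * R) = 2 * (q ^ (js - 1) * R) := by ring
    rw [this, Nat.mul_div_cancel_left _ (by norm_num)]
  have hbig : q ^ (jb - 1) * (q - 1) / 2 = q ^ (jb - js) * c := by
    rw [hcR, hR]
    have h1 : q ^ (jb - 1) * (2 * R) = 2 * (q ^ (jb - 1) * R) := by ring
    rw [h1, Nat.mul_div_cancel_left _ (by norm_num)]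
    have h2 : q ^ (jb - js) * q ^ (js - 1) = q ^ (jb - 1) := by
      rw [← pow_add]; congr 1; omega
    rw [← mul_assoc, h2]
  have hperiod : ∀ v, θ ^ (g ^ (2 * (v + c))) = θ ^ (g ^ (2 * v)) := by
    intro v
    have hgc : g ^ (2 * c) ≡ 1 [MOD q ^ js] := by
      have h0 : (2 : ℕ) * c ≡ 0 [MOD q ^ (js - 1) * (q - 1)] := by
        apply (Nat.modEq_zero_iff_dvd).mpr
        rw [hcR, hR]
        exact ⟨1, by ring⟩
      have := pow_modEq_of_modEq ordsm h0
      simpa using this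
    have hcong : g ^ (2 * (v + c)) ≡ g ^ (2 * v) [MOD q ^ js] := by
      have hsplit : g ^ (2 * (v + c)) = g ^ (2 * v) * g ^ (2 * c) := by
        rw [← pow_add]; congr 1; ring
      calc g ^ (2 * (v + c)) = g ^ (2 * v) * g ^ (2 * c) := hsplit
        _ ≡ g ^ (2 * v) * 1 [MOD q ^ js] := hgc.mul_left _
        _ = g ^ (2 * v) := by rw [mul_one]
    exact cyc_pow_congr θ hθ hcong
  rw [hbig, sum_block _ _ _ hperiod, odd_cast_eq_one h2 (hqodd.pow), one_mul]

lemma half_inverse {N : ℕ} (x : ℕ) (hN : 1 < N) (hcop : Nat.Coprime x N) :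
    ∃ a, 0 < a ∧ a * x ≡ 1 [MOD N] := by
  haveI : NeZero N := ⟨by omega⟩
  haveI : Fact (1 < N) := ⟨hN⟩
  set u := ZMod.unitOfCoprime x hcop with hu
  set a := ((u⁻¹ : (ZMod N)ˣ) : ZMod N).val with ha
  have hcast : ((a : ℕ) : ZMod N) = ((u⁻¹ : (ZMod N)ˣ) : ZMod N) := ZMod.natCast_rightInverse _
  have hprod : ((a * x : ℕ) : ZMod N) = ((1 : ℕ) : ZMod N) := by
    push_cast
    rw [hcast, ← ZMod.coe_unitOfCoprime x hcop, ← hu, ← Units.val_mul, inv_mul_cancel]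
    simp
  have hmod : a * x ≡ 1 [MOD N] := (ZMod.natCast_eq_natCast_iff _ _ _).mp hprod
  refine ⟨a, ?_, hmod⟩
  rcases Nat.eq_zero_or_pos a with h0 | h0
  · exfalso
    have : ((u⁻¹ : (ZMod N)ˣ) : ZMod N) = 0 := by
      rw [← hcast, h0]; simp
    exact Units.ne_zero _ this
  · exact h0

lemma crt_split {K : Type*} [Field K] (p q m n : ℕ) (hp1 : 1 < p) (hq1 : 1 < q)
    (hm : 1 ≤ m) (hn : 1 ≤ n)
    (hcop : Nat.Coprime (p ^ m) (q ^ n)) (β : K) (hβ : IsPrimitiveRoot β (p ^ m * q ^ n)) :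
    ∃ ωp ωq : K, β = ωp * ωq ∧ (∀ x, ωp ^ x = 1 ↔ p ^ m ∣ x) ∧ (∀ x, ωq ^ x = 1 ↔ q ^ n ∣ x) := by
  have hβN : β ^ (p ^ m * q ^ n) = 1 := hβ.pow_eq_one
  have hordβ : orderOf β = p ^ m * q ^ n := hβ.eq_orderOf.symm
  have hpm1 : 1 < p ^ m := by
    calc 1 < p := hp1
      _ ≤ p ^ m := Nat.le_self_pow (by omega) p
  have hqn1 : 1 < q ^ n := by
    calc 1 < q := hq1
      _ ≤ q ^ n := Nat.le_self_pow (by omega) q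
  obtain ⟨a, ha0, ha⟩ := half_inverse (q ^ n) hpm1 hcop.symm
  obtain ⟨b, hb0, hb⟩ := half_inverse (p ^ m) hqn1 hcop
  refine ⟨β ^ (a * q ^ n), β ^ (b * p ^ m), ?_, ?_, ?_⟩
  · -- split
    rw [← pow_add]
    have hmodN : a * q ^ n + b * p ^ m ≡ 1 [MOD p ^ m * q ^ n] := by
      rw [← Nat.modEq_and_modEq_iff_modEq_mul hcop]
      constructor
      · have h1 : a * q ^ n + b * p ^ m ≡ 1 + 0 [MOD p ^ m] :=
          Nat.ModEq.add ha ((Nat.modEq_zero_iff_dvd).mpr ⟨b, by ring⟩)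
        simpa using h1
      · have h1 : a * q ^ n + b * p ^ m ≡ 0 + 1 [MOD q ^ n] :=
          Nat.ModEq.add ((Nat.modEq_zero_iff_dvd).mpr ⟨a, by ring⟩) hb
        simpa using h1
    rw [cyc_pow_congr β hβN hmodN, pow_one]
  · -- order of ωp
    have hgcd : Nat.gcd (p ^ m * q ^ n) (a * q ^ n) = q ^ n := by
      rw [Nat.gcd_mul_right]
      have hga : Nat.gcd (p ^ m) a = 1 := by
        have hd1 : Nat.gcd (p ^ m) a ∣ a * q ^ n := (Nat.gcd_dvd_right _ _).mul_right _
        have hd2 : Nat.gcd (p ^ m) a ∣ a * q ^ n - 1 := by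
          have := (Nat.modEq_iff_dvd' (by
            calc 1 ≤ a := ha0
              _ ≤ a * q ^ n := Nat.le_mul_of_pos_right _ (by omega))).mp ha.symm
          exact (Nat.gcd_dvd_left _ _).trans this
        have := Nat.dvd_sub hd1 hd2
        have h1le : 1 ≤ a * q ^ n := by
          calc 1 ≤ a := ha0
            _ ≤ a * q ^ n := Nat.le_mul_of_pos_right _ (by omega)
        have hsub : a * q ^ n - (a * q ^ n - 1) = 1 := by omega
        rw [hsub] at this
        exact Nat.dvd_one.mp this
      rw [hga, one_mul]
    have hord : orderOf (β ^ (a * q ^ n)) = p ^ m := by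
      rw [orderOf_pow' β (by positivity), hordβ, hgcd, Nat.mul_div_cancel _ (by positivity)]
    intro x
    rw [← hord, orderOf_dvd_iff_pow_eq_one]
  · -- order of ωq
    have hgcd : Nat.gcd (p ^ m * q ^ n) (b * p ^ m) = p ^ m := by
      rw [mul_comm (p ^ m) (q ^ n), Nat.gcd_mul_right]
      have hga : Nat.gcd (q ^ n) b = 1 := by
        have hd1 : Nat.gcd (q ^ n) b ∣ b * p ^ m := (Nat.gcd_dvd_right _ _).mul_right _
        have hd2 : Nat.gcd (q ^ n) b ∣ b * p ^ m - 1 := by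
          have := (Nat.modEq_iff_dvd' (by
            calc 1 ≤ b := hb0
              _ ≤ b * p ^ m := Nat.le_mul_of_pos_right _ (by omega))).mp hb.symm
          exact (Nat.gcd_dvd_left _ _).trans this
        have := Nat.dvd_sub hd1 hd2
        have hsub : b * p ^ m - (b * p ^ m - 1) = 1 := by
          have h1le : 1 ≤ b * p ^ m := by
            calc 1 ≤ b := hb0
              _ ≤ b * p ^ m := Nat.le_mul_of_pos_right _ (by omega)
          omega
        rw [hsub] at this
        exact Nat.dvd_one.mp this
      rw [hga, one_mul]
    have hord : orderOf (β ^ (b * p ^ m)) = q ^ n := by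
      rw [orderOf_pow' β (by positivity), hordβ, hgcd]
      rw [mul_comm (p ^ m) (q ^ n), Nat.mul_div_cancel _ (by positivity)]
    intro x
    rw [← hord, orderOf_dvd_iff_pow_eq_one]

end GYHelpers

lemma master {K : Type*} [Field K]
    (p q m n g y i j k M : ℕ)
    (hp : p.Prime) (hq : q.Prime) (hpodd : Odd p) (hqodd : Odd q)
    (hi1 : 1 ≤ i) (him : i ≤ m) (hj1 : 1 ≤ j) (hjn : j ≤ n)
    (ordp : orderOf (g : ZMod (p ^ i)) = p ^ (i - 1) * (p - 1))
    (ordq : orderOf (g : ZMod (q ^ j)) = q ^ (j - 1) * (q - 1))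
    (hyp : y ≡ g [MOD p ^ i]) (hyq : y ≡ 1 [MOD q ^ j])
    (hMd : p ^ i * q ^ j ∣ M)
    (β ωp ωq : K) (hβ : β = ωp * ωq)
    (hωp : ωp ^ (p ^ m) = 1) (hωq : ωq ^ (q ^ n) = 1) :
    ∑ x ∈ GC0 g y M (dij p q i j / 2) (eij p q i j),
        β ^ (p ^ (m - i) * q ^ (n - j) * k * x)
      = (∑ u ∈ range (p ^ (i - 1) * (p - 1)),
            (ωp ^ (p ^ (m - i) * q ^ (n - j) * k)) ^ (g ^ u))
        * (∑ v ∈ range (q ^ (j - 1) * (q - 1) / 2),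
            (ωq ^ (p ^ (m - i) * q ^ (n - j) * k)) ^ (g ^ (2 * v))) := by
  have hp1 := hp.one_lt
  have hq1 := hq.one_lt
  set φp := p ^ (i - 1) * (p - 1) with hφp
  set φq := q ^ (j - 1) * (q - 1) with hφq
  set e := Nat.gcd φp φq with he
  set c := p ^ (m - i) * q ^ (n - j) with hc
  have hφppos : 0 < φp := Nat.mul_pos (pow_pos (by omega) _) (by omega)
  have hφqpos : 0 < φq := Nat.mul_pos (pow_pos (by omega) _) (by omega)
  have hφpe : Even φp := by
    obtain ⟨a, ha⟩ := hpodd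
    exact (Nat.even_mul).mpr (Or.inr ⟨a, by omega⟩)
  have hφqe : Even φq := by
    obtain ⟨a, ha⟩ := hqodd
    exact (Nat.even_mul).mpr (Or.inr ⟨a, by omega⟩)
  have heq : e ∣ φq := Nat.gcd_dvd_right _ _
  have hepos : 0 < e := Nat.gcd_pos_of_pos_left _ hφppos
  -- counting identity
  have hφpe' := hφpe
  have hφqe' := hφqe
  obtain ⟨P, hP⟩ : ∃ P, φp = P + P := hφpe'
  obtain ⟨Q, hQ⟩ : ∃ Q, φq = Q + Q := hφqe'
  have hdij : dij p q i j = φp * φq / e := rfl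
  have hcount : (dij p q i j / 2) * e = φp * (φq / 2) := by
    rw [hdij, Nat.mul_div_assoc φp heq]
    have h1 : φp * (φq / e) = 2 * (P * (φq / e)) := by rw [hP]; ring
    rw [h1, Nat.mul_div_cancel_left _ (by norm_num)]
    have h2 : φq / 2 = Q := by omega
    rw [h2, mul_assoc, Nat.div_mul_cancel heq]
    rw [hP, hQ]; ring
  -- beta^N = 1
  have hβN : β ^ (p ^ m * q ^ n) = 1 := by
    rw [hβ, mul_pow]
    have h1 : ωp ^ (p ^ m * q ^ n) = (ωp ^ (p ^ m)) ^ (q ^ n) := by rw [← pow_mul]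
    have h2 : ωq ^ (p ^ m * q ^ n) = (ωq ^ (q ^ n)) ^ (p ^ m) := by
      rw [← pow_mul, mul_comm]
    rw [h1, h2, hωp, hωq, one_pow, one_pow, one_mul]
  have hcpim : c * (p ^ i * q ^ j) = p ^ m * q ^ n := by
    rw [hc]
    have h1 : p ^ (m - i) * p ^ i = p ^ m := by rw [← pow_add]; congr 1; omega
    have h2 : q ^ (n - j) * q ^ j = q ^ n := by rw [← pow_add]; congr 1; omega
    calc p ^ (m - i) * q ^ (n - j) * (p ^ i * q ^ j)
        = (p ^ (m - i) * p ^ i) * (q ^ (n - j) * q ^ j) := by ring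
      _ = p ^ m * q ^ n := by rw [h1, h2]
  have hpmdvd : p ^ m ∣ c * k * p ^ i := by
    have h1 : p ^ (m - i) * p ^ i = p ^ m := by rw [← pow_add]; congr 1; omega
    exact ⟨q ^ (n - j) * k, by rw [← h1, hc]; ring⟩
  have hqndvd : q ^ n ∣ c * k * q ^ j := by
    have h2 : q ^ (n - j) * q ^ j = q ^ n := by rw [← pow_add]; congr 1; omega
    exact ⟨p ^ (m - i) * k, by rw [← h2, hc]; ring⟩
  -- congruence transport lemmas
  have subA : ∀ x x' : ℕ, x ≡ x' [MOD φp] →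
      ωp ^ (c * k * g ^ x) = ωp ^ (c * k * g ^ x') := by
    intro x x' hx
    have h1 : g ^ x ≡ g ^ x' [MOD p ^ i] := pow_modEq_of_modEq ordp hx
    have h2 : c * k * g ^ x ≡ c * k * g ^ x' [MOD c * k * p ^ i] :=
      Nat.ModEq.mul_left' (c * k) h1
    exact cyc_pow_congr ωp hωp (Nat.ModEq.of_dvd hpmdvd h2)
  have subB : ∀ x x' : ℕ, x ≡ x' [MOD φq] →
      ωq ^ (c * k * g ^ x) = ωq ^ (c * k * g ^ x') := by
    intro x x' hx
    have h1 : g ^ x ≡ g ^ x' [MOD q ^ j] := pow_modEq_of_modEq ordq hx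
    have h2 : c * k * g ^ x ≡ c * k * g ^ x' [MOD c * k * q ^ j] :=
      Nat.ModEq.mul_left' (c * k) h1
    exact cyc_pow_congr ωq hωq (Nat.ModEq.of_dvd hqndvd h2)
  -- termwise identity
  have hterm : ∀ t s : ℕ,
      β ^ (c * k * (g ^ (2 * t) * y ^ s % M))
        = ωp ^ (c * k * g ^ (2 * t + s)) * ωq ^ (c * k * g ^ (2 * t)) := by
    intro t s
    have hstep1 : β ^ (c * k * (g ^ (2 * t) * y ^ s % M)) = β ^ (c * k * (g ^ (2 * t) * y ^ s)) := by
      have hmod : g ^ (2 * t) * y ^ s % M ≡ g ^ (2 * t) * y ^ s [MOD M] := Nat.mod_modEq _ _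
      have h2 : c * k * (g ^ (2 * t) * y ^ s % M) ≡ c * k * (g ^ (2 * t) * y ^ s)
          [MOD c * k * M] := Nat.ModEq.mul_left' (c * k) hmod
      have hNdvd : p ^ m * q ^ n ∣ c * k * M := by
        obtain ⟨M', hM'⟩ := hMd
        rw [hM', ← hcpim]
        exact ⟨k * M', by ring⟩
      have h3 : β ^ (c * k * M) = 1 := by
        obtain ⟨w, hw⟩ := hNdvd
        rw [hw, pow_mul, hβN, one_pow]
      exact cyc_pow_congr β h3 h2
    rw [hstep1, hβ, mul_pow]
    congr 1
    · -- ωp part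
      have h1 : g ^ (2 * t) * y ^ s ≡ g ^ (2 * t + s) [MOD p ^ i] := by
        calc g ^ (2 * t) * y ^ s ≡ g ^ (2 * t) * g ^ s [MOD p ^ i] := (hyp.pow s).mul_left _
          _ = g ^ (2 * t + s) := by rw [pow_add]
      have h2 : c * k * (g ^ (2 * t) * y ^ s) ≡ c * k * g ^ (2 * t + s)
          [MOD c * k * p ^ i] := Nat.ModEq.mul_left' (c * k) h1
      exact cyc_pow_congr ωp hωp (Nat.ModEq.of_dvd hpmdvd h2)
    · -- ωq part
      have h1 : g ^ (2 * t) * y ^ s ≡ g ^ (2 * t) [MOD q ^ j] := by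
        calc g ^ (2 * t) * y ^ s ≡ g ^ (2 * t) * 1 ^ s [MOD q ^ j] := (hyq.pow s).mul_left _
          _ = g ^ (2 * t) := by rw [one_pow, mul_one]
      have h2 : c * k * (g ^ (2 * t) * y ^ s) ≡ c * k * g ^ (2 * t)
          [MOD c * k * q ^ j] := Nat.ModEq.mul_left' (c * k) h1
      exact cyc_pow_congr ωq hωq (Nat.ModEq.of_dvd hqndvd h2)
  -- injectivity of the parametrization
  have hXinj : ∀ ts ∈ (range (dij p q i j / 2)) ×ˢ (range e),
      ∀ ts' ∈ (range (dij p q i j / 2)) ×ˢ (range e),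
      g ^ (2 * ts.1) * y ^ ts.2 % M = g ^ (2 * ts'.1) * y ^ ts'.2 % M → ts = ts' := by
    rintro ⟨t, s⟩ hts ⟨t', s'⟩ hts' hmeq
    simp only [mem_product, mem_range] at hts hts'
    have hMeq : g ^ (2 * t) * y ^ s ≡ g ^ (2 * t') * y ^ s' [MOD M] := hmeq
    have hpi : g ^ (2 * t) * y ^ s ≡ g ^ (2 * t') * y ^ s' [MOD p ^ i] :=
      Nat.ModEq.of_dvd ((dvd_mul_right _ _).trans hMd) hMeq
    have hqj : g ^ (2 * t) * y ^ s ≡ g ^ (2 * t') * y ^ s' [MOD q ^ j] :=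
      Nat.ModEq.of_dvd ((dvd_mul_left _ _).trans hMd) hMeq
    have hgp : g ^ (2 * t + s) ≡ g ^ (2 * t' + s') [MOD p ^ i] := by
      have e1 : g ^ (2 * t) * y ^ s ≡ g ^ (2 * t + s) [MOD p ^ i] := by
        calc g ^ (2 * t) * y ^ s ≡ g ^ (2 * t) * g ^ s [MOD p ^ i] := (hyp.pow s).mul_left _
          _ = g ^ (2 * t + s) := by rw [pow_add]
      have e2 : g ^ (2 * t') * y ^ s' ≡ g ^ (2 * t' + s') [MOD p ^ i] := by
        calc g ^ (2 * t') * y ^ s' ≡ g ^ (2 * t') * g ^ s' [MOD p ^ i] := (hyp.pow s').mul_left _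
          _ = g ^ (2 * t' + s') := by rw [pow_add]
      exact (e1.symm.trans hpi).trans e2
    have hgq : g ^ (2 * t) ≡ g ^ (2 * t') [MOD q ^ j] := by
      have e1 : g ^ (2 * t) * y ^ s ≡ g ^ (2 * t) [MOD q ^ j] := by
        calc g ^ (2 * t) * y ^ s ≡ g ^ (2 * t) * 1 ^ s [MOD q ^ j] := (hyq.pow s).mul_left _
          _ = g ^ (2 * t) := by rw [one_pow, mul_one]
      have e2 : g ^ (2 * t') * y ^ s' ≡ g ^ (2 * t') [MOD q ^ j] := by
        calc g ^ (2 * t') * y ^ s' ≡ g ^ (2 * t') * 1 ^ s' [MOD q ^ j] := (hyq.pow s').mul_left _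
          _ = g ^ (2 * t') := by rw [one_pow, mul_one]
      exact (e1.symm.trans hqj).trans e2
    have c1 : 2 * t + s ≡ 2 * t' + s' [MOD φp] := modEq_of_pow_modEq ordp hφppos hgp
    have c2 : 2 * t ≡ 2 * t' [MOD φq] := modEq_of_pow_modEq ordq hφqpos hgq
    have := inj_arith hφppos hφqpos hφpe hφqe
      (show t < φp * φq / Nat.gcd φp φq / 2 from hts.1) (hts'.1) hts.2 hts'.2 c1 c2
    exact Prod.ext this.1 this.2
  -- sum over GC0 = rectangular sum
  have hstepA : ∑ x ∈ GC0 g y M (dij p q i j / 2) (eij p q i j),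
      β ^ (c * k * x)
      = ∑ ts ∈ (range (dij p q i j / 2)) ×ˢ (range e),
          ωp ^ (c * k * g ^ (2 * ts.1 + ts.2)) * ωq ^ (c * k * g ^ (2 * ts.1)) := by
    rw [GC0, show eij p q i j = e from rfl, Finset.sum_image hXinj]
    exact Finset.sum_congr rfl (fun ts _ => hterm ts.1 ts.2)
  -- reindex to the full rectangle
  have hmod2 : ∀ t : ℕ, 2 * (2 * t % φq / 2) = 2 * t % φq := by
    intro t
    have h1 := Nat.div_add_mod (2 * t) φq
    have h2 : Even (φq * (2 * t / φq)) := hφqe.mul_right _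
    obtain ⟨b, hb⟩ := h2
    omega
  set F : ℕ × ℕ → K := fun uv => ωp ^ (c * k * g ^ uv.1) * ωq ^ (c * k * g ^ (2 * uv.2))
    with hF
  set Φ : ℕ × ℕ → ℕ × ℕ := fun ts => ((2 * ts.1 + ts.2) % φp, 2 * ts.1 % φq / 2) with hΦ
  have htermΦ : ∀ ts : ℕ × ℕ,
      F (Φ ts) = ωp ^ (c * k * g ^ (2 * ts.1 + ts.2)) * ωq ^ (c * k * g ^ (2 * ts.1)) := by
    rintro ⟨t, s⟩
    simp only [hF, hΦ]
    congr 1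
    · exact subA _ _ (Nat.mod_modEq _ _)
    · rw [hmod2 t]
      exact subB _ _ (Nat.mod_modEq _ _)
  have hΦinj : ∀ ts ∈ (range (dij p q i j / 2)) ×ˢ (range e),
      ∀ ts' ∈ (range (dij p q i j / 2)) ×ˢ (range e), Φ ts = Φ ts' → ts = ts' := by
    rintro ⟨t, s⟩ hts ⟨t', s'⟩ hts' heqΦ
    simp only [mem_product, mem_range] at hts hts'
    simp only [hΦ, Prod.mk.injEq] at heqΦ
    obtain ⟨h1, h2'⟩ := heqΦ
    have h2 : 2 * t % φq = 2 * t' % φq := by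
      have := hmod2 t
      have := hmod2 t'
      omega
    have c1 : 2 * t + s ≡ 2 * t' + s' [MOD φp] := h1
    have c2 : 2 * t ≡ 2 * t' [MOD φq] := h2
    have := inj_arith hφppos hφqpos hφpe hφqe
      (show t < φp * φq / Nat.gcd φp φq / 2 from hts.1) (hts'.1) hts.2 hts'.2 c1 c2
    exact Prod.ext this.1 this.2
  have himgΦ : ((range (dij p q i j / 2)) ×ˢ (range e)).image Φ
      = (range φp) ×ˢ (range (φq / 2)) := by
    apply Finset.eq_of_subset_of_card_le
    · intro uv huv
      simp only [mem_image, mem_product, mem_range] at huv ⊢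
      obtain ⟨⟨t, s⟩, _, rfl⟩ := huv
      simp only [hΦ]
      constructor
      · exact Nat.mod_lt _ hφppos
      · have hlt : 2 * t % φq < φq := Nat.mod_lt _ hφqpos
        have := hmod2 t
        omega
    · rw [Finset.card_image_of_injOn (fun a ha b hb h => hΦinj a ha b hb h)]
      rw [Finset.card_product, Finset.card_product]
      simp only [card_range]
      rw [hcount]
  have hstepB : ∑ ts ∈ (range (dij p q i j / 2)) ×ˢ (range e),
      ωp ^ (c * k * g ^ (2 * ts.1 + ts.2)) * ωq ^ (c * k * g ^ (2 * ts.1))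
      = ∑ uv ∈ (range φp) ×ˢ (range (φq / 2)), F uv := by
    rw [← himgΦ, Finset.sum_image hΦinj]
    exact (Finset.sum_congr rfl (fun ts _ => htermΦ ts)).symm
  have hstepC : ∑ uv ∈ (range φp) ×ˢ (range (φq / 2)), F uv
      = (∑ u ∈ range φp, ωp ^ (c * k * g ^ u))
        * (∑ v ∈ range (φq / 2), ωq ^ (c * k * g ^ (2 * v))) := by
    rw [Finset.sum_product, Finset.sum_mul_sum]
  rw [hstepA, hstepB, hstepC]
  congr 1
  · exact Finset.sum_congr rfl (fun u _ => by rw [← pow_mul])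
  · exact Finset.sum_congr rfl (fun v _ => by rw [← pow_mul])


set_option maxHeartbeats 3200000 in
theorem statement4
    (p q m n g y : ℕ)
    (hp : p.Prime) (hq : q.Prime) (hpq : p ≠ q) (hpodd : Odd p) (hqodd : Odd q)
    (hm : 1 ≤ m) (hn : 1 ≤ n) (hgodd : Odd g)
    (hgp : ∀ i, 1 ≤ i → i ≤ m → orderOf (g : ZMod (p ^ i)) = Nat.totient (p ^ i))
    (hg2p : ∀ i, 1 ≤ i → i ≤ m → orderOf (g : ZMod (2 * p ^ i)) = Nat.totient (2 * p ^ i))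
    (hgq : ∀ j, 1 ≤ j → j ≤ n → orderOf (g : ZMod (q ^ j)) = Nat.totient (q ^ j))
    (hg2q : ∀ j, 1 ≤ j → j ≤ n → orderOf (g : ZMod (2 * q ^ j)) = Nat.totient (2 * q ^ j))
    (hylt : y < 2 * (p ^ m * q ^ n))
    (hyg : y ≡ g [MOD 2 * p ^ m]) (hy1 : y ≡ 1 [MOD 2 * q ^ n])
    (K : Type*) [Field K] [Fintype K]
    (hK : Fintype.card K = 4 ^ orderOf (4 : ZMod (p ^ m * q ^ n)))
    (β : K) (hβ : IsPrimitiveRoot β (p ^ m * q ^ n))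
    (A B l : ℕ) (hA : A ≤ m - 1) (hB : B ≤ n - 1) (hl : Nat.gcd l (p * q) = 1)
    : ∀ i j, 1 ≤ i → i ≤ m → 1 ≤ j → j ≤ n →
      ((i ≤ A ∧ j ≤ B →
          ∑ t ∈ H2PQ p q m n g y 0 i j, (β ^ (p ^ A * q ^ B * l)) ^ t
            = (((p - 1) * (q - 1) * p ^ (i - 1) * q ^ (j - 1) / 2 : ℕ) : K)) ∧
        (i = A + 1 ∧ j = B + 1 →
          ∑ t ∈ H2PQ p q m n g y 0 i j, (β ^ (p ^ A * q ^ B * l)) ^ t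
            = ∑ t ∈ DPQ p q g y 0 1 1, (β ^ (p ^ (m - 1) * q ^ (n - 1))) ^ (l * t)) ∧
        (A + 1 < i ∨ B + 1 < j →
          ∑ t ∈ H2PQ p q m n g y 0 i j, (β ^ (p ^ A * q ^ B * l)) ^ t = 0) ∧
        (i ≤ A ∧ j = B + 1 →
          ∑ t ∈ H2PQ p q m n g y 0 i j, (β ^ (p ^ A * q ^ B * l)) ^ t = 0) ∧
        (i = A + 1 ∧ j ≤ B →
          ∑ t ∈ H2PQ p q m n g y 0 i j, (β ^ (p ^ A * q ^ B * l)) ^ t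
            = (((q - 1) / 2 : ℕ) : K))) := by
  intro i j hi1 him hj1 hjn
  have hp1 := hp.one_lt
  have hq1 := hq.one_lt
  have hAm : A + 1 ≤ m := by omega
  have hBn : B + 1 ≤ n := by omega
  have h2K : (2 : K) = 0 := char_two_of_card _ hK
  have hpq' : Nat.Coprime p q := (Nat.coprime_primes hp hq).mpr hpq
  have hcopPQ : Nat.Coprime (p ^ m) (q ^ n) := Nat.Coprime.pow m n hpq'
  obtain ⟨ωp, ωq, hsplit, hωpord, hωqord⟩ := crt_split p q m n hp1 hq1 hm hn hcopPQ β hβ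
  have hωp1 : ωp ^ (p ^ m) = 1 := (hωpord _).mpr dvd_rfl
  have hωq1 : ωq ^ (q ^ n) = 1 := (hωqord _).mpr dvd_rfl
  have ordpi : orderOf (g : ZMod (p ^ i)) = p ^ (i - 1) * (p - 1) := by
    rw [hgp i hi1 him, Nat.totient_prime_pow hp (by omega)]
  have ordqj : orderOf (g : ZMod (q ^ j)) = q ^ (j - 1) * (q - 1) := by
    rw [hgq j hj1 hjn, Nat.totient_prime_pow hq (by omega)]
  have ordp1 : orderOf (g : ZMod (p ^ 1)) = p ^ (1 - 1) * (p - 1) := by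
    rw [hgp 1 le_rfl hm, Nat.totient_prime_pow hp (by omega)]
  have ordq1 : orderOf (g : ZMod (q ^ 1)) = q ^ (1 - 1) * (q - 1) := by
    rw [hgq 1 le_rfl hn, Nat.totient_prime_pow hq (by omega)]
  have hyp_i : y ≡ g [MOD p ^ i] :=
    Nat.ModEq.of_dvd ((pow_dvd_pow p him).trans (dvd_mul_left _ 2)) hyg
  have hyq_j : y ≡ 1 [MOD q ^ j] :=
    Nat.ModEq.of_dvd ((pow_dvd_pow q hjn).trans (dvd_mul_left _ 2)) hy1
  have hyp_1 : y ≡ g [MOD p ^ 1] :=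
    Nat.ModEq.of_dvd ((pow_dvd_pow p hm).trans (dvd_mul_left _ 2)) hyg
  have hyq_1 : y ≡ 1 [MOD q ^ 1] :=
    Nat.ModEq.of_dvd ((pow_dvd_pow q hn).trans (dvd_mul_left _ 2)) hy1
  have hpl : ¬ p ∣ l := by
    intro hd
    have h1 : p ∣ Nat.gcd l (p * q) := Nat.dvd_gcd hd (dvd_mul_right _ _)
    rw [hl] at h1
    have := Nat.le_of_dvd one_pos h1
    omega
  have hql : ¬ q ∣ l := by
    intro hd
    have h1 : q ∣ Nat.gcd l (p * q) := Nat.dvd_gcd hd (dvd_mul_left _ _)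
    rw [hl] at h1
    have := Nat.le_of_dvd one_pos h1
    omega
  have hpY : ∀ s : ℕ, ¬ p ∣ q ^ s * l := by
    intro s hd
    rcases (Nat.Prime.dvd_mul hp).mp hd with h | h
    · have := hp.dvd_of_dvd_pow h
      rw [Nat.prime_dvd_prime_iff_eq hp hq] at this
      exact hpq this
    · exact hpl h
  have hqY : ∀ s : ℕ, ¬ q ∣ p ^ s * l := by
    intro s hd
    rcases (Nat.Prime.dvd_mul hq).mp hd with h | h
    · have := hq.dvd_of_dvd_pow h
      rw [Nat.prime_dvd_prime_iff_eq hq hp] at this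
      exact hpq this.symm
    · exact hql h
  have hφpe : Even (p ^ (i - 1) * (p - 1)) := by
    obtain ⟨a, ha⟩ := hpodd
    exact (Nat.even_mul).mpr (Or.inr ⟨a, by omega⟩)
  -- the key factorization
  set E := p ^ (m - i) * q ^ (n - j) * (p ^ A * q ^ B * l) with hE
  have hc0 : 0 < p ^ (m - i) * q ^ (n - j) := by positivity
  have key : ∑ t ∈ H2PQ p q m n g y 0 i j, (β ^ (p ^ A * q ^ B * l)) ^ t
      = (∑ u ∈ range (p ^ (i - 1) * (p - 1)), (ωp ^ E) ^ (g ^ u))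
        * (∑ v ∈ range (q ^ (j - 1) * (q - 1) / 2), (ωq ^ E) ^ (g ^ (2 * v))) := by
    have hstep : ∑ t ∈ H2PQ p q m n g y 0 i j, (β ^ (p ^ A * q ^ B * l)) ^ t
        = ∑ x ∈ GC0 g y (2 * (p ^ i * q ^ j)) (dij p q i j / 2) (eij p q i j),
            β ^ (p ^ (m - i) * q ^ (n - j) * (p ^ A * q ^ B * l) * x) := by
      have hDD : H2PQ p q m n g y 0 i j
          = (GC0 g y (2 * (p ^ i * q ^ j)) (dij p q i j / 2) (eij p q i j)).image
              (fun x => p ^ (m - i) * q ^ (n - j) * x) := rfl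
      rw [hDD, Finset.sum_image (fun a _ b _ h => Nat.eq_of_mul_eq_mul_left hc0 h)]
      apply Finset.sum_congr rfl
      intro x _
      rw [← pow_mul]
      congr 1
      ring
    rw [hstep]
    exact master p q m n g y i j (p ^ A * q ^ B * l) (2 * (p ^ i * q ^ j)) hp hq hpodd hqodd
      hi1 him hj1 hjn ordpi ordqj hyp_i hyq_j (dvd_mul_left _ 2) β ωp ωq hsplit hωp1 hωq1
  -- common: (ωp^E)^(p^i) = 1
  have hEpi : (ωp ^ E) ^ (p ^ i) = 1 := by
    rw [← pow_mul]
    apply (hωpord _).mpr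
    refine ⟨q ^ (n - j) * (p ^ A * q ^ B * l), ?_⟩
    have h1 : p ^ (m - i) * p ^ i = p ^ m := by rw [← pow_add]; congr 1; omega
    rw [hE, ← h1]; ring
  refine ⟨?_, ?_, ?_, ?_, ?_⟩
  · -- case 1 : i ≤ A ∧ j ≤ B
    rintro ⟨hiA, hjB⟩
    have hη1 : ωp ^ E = 1 := by
      apply (hωpord _).mpr
      refine ⟨p ^ (A - i) * (q ^ (n - j) * (q ^ B * l)), ?_⟩
      have h1 : p ^ m * p ^ (A - i) = p ^ (m - i) * p ^ A := by
        rw [← pow_add, ← pow_add]; congr 1; omega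
      rw [hE]
      calc p ^ (m - i) * q ^ (n - j) * (p ^ A * q ^ B * l)
          = (p ^ (m - i) * p ^ A) * (q ^ (n - j) * (q ^ B * l)) := by ring
        _ = p ^ m * (p ^ (A - i) * (q ^ (n - j) * (q ^ B * l))) := by rw [← h1]; ring
    rw [key]
    have hSP : ∑ u ∈ range (p ^ (i - 1) * (p - 1)), (ωp ^ E) ^ (g ^ u)
        = (((p ^ (i - 1) * (p - 1)) : ℕ) : K) := by
      rw [Finset.sum_congr rfl (fun u _ => by rw [hη1, one_pow] :
        ∀ u ∈ range (p ^ (i - 1) * (p - 1)), (ωp ^ E) ^ (g ^ u) = 1)]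
      simp
    rw [hSP, even_cast_eq_zero h2K hφpe, zero_mul]
    -- RHS even
    obtain ⟨P2, hP2⟩ : ∃ P2, p - 1 = 2 * P2 := by obtain ⟨a, ha⟩ := hpodd; exact ⟨a, by omega⟩
    obtain ⟨Q2, hQ2⟩ : ∃ Q2, q - 1 = 2 * Q2 := by obtain ⟨a, ha⟩ := hqodd; exact ⟨a, by omega⟩
    have hnum : (p - 1) * (q - 1) * p ^ (i - 1) * q ^ (j - 1) / 2
        = 2 * (P2 * Q2 * p ^ (i - 1) * q ^ (j - 1)) := by
      rw [hP2, hQ2]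
      have h1 : 2 * P2 * (2 * Q2) * p ^ (i - 1) * q ^ (j - 1)
          = 2 * (2 * (P2 * Q2 * p ^ (i - 1) * q ^ (j - 1))) := by ring
      rw [h1, Nat.mul_div_cancel_left _ (by norm_num)]
    rw [hnum, even_cast_eq_zero h2K ⟨P2 * Q2 * p ^ (i - 1) * q ^ (j - 1), by omega⟩]
  · -- case 2 : i = A + 1 ∧ j = B + 1
    rintro ⟨hiA, hjB⟩
    subst hiA
    subst hjB
    have hEeq : E = p ^ (m - 1) * q ^ (n - 1) * l := by
      rw [hE]
      have h1 : p ^ (m - (A + 1)) * p ^ A = p ^ (m - 1) := by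
        rw [← pow_add]; congr 1; omega
      have h2 : q ^ (n - (B + 1)) * q ^ B = q ^ (n - 1) := by
        rw [← pow_add]; congr 1; omega
      calc p ^ (m - (A + 1)) * q ^ (n - (B + 1)) * (p ^ A * q ^ B * l)
          = (p ^ (m - (A + 1)) * p ^ A) * (q ^ (n - (B + 1)) * q ^ B) * l := by ring
        _ = p ^ (m - 1) * q ^ (n - 1) * l := by rw [h1, h2]
    have hηp : (ωp ^ E) ^ p = 1 := by
      rw [← pow_mul]
      apply (hωpord _).mpr
      refine ⟨q ^ (n - 1) * l, ?_⟩
      have h1 : p ^ (m - 1) * p = p ^ m := by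
        rw [← pow_succ]; congr 1; omega
      rw [hEeq, ← h1]; ring
    have hη1 : ωp ^ E ≠ 1 := by
      intro h
      have hd := (hωpord E).mp h
      rw [hEeq] at hd
      have hd2 : p ^ m ∣ p ^ (m - 1) * (q ^ (n - 1) * l) := by
        have : p ^ (m - 1) * q ^ (n - 1) * l = p ^ (m - 1) * (q ^ (n - 1) * l) := by ring
        rwa [this] at hd
      exact not_pow_dvd_of hp1 (by omega) (hpY (n - 1)) hd2
    have hSP1 : ∑ u ∈ range (p ^ (A + 1 - 1) * (p - 1)), (ωp ^ E) ^ (g ^ u) = 1 :=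
      SP_one h2K p (A + 1) g hp hpodd (by omega) ordpi (ωp ^ E) hEpi hη1 hηp
    have hθq : (ωq ^ E) ^ (q ^ 1) = 1 := by
      rw [← pow_mul]
      apply (hωqord _).mpr
      refine ⟨p ^ (m - 1) * l, ?_⟩
      have h1 : q ^ (n - 1) * q ^ 1 = q ^ n := by rw [← pow_add]; congr 1; omega
      rw [hEeq, ← h1]; ring
    have hSQred := SQ_reduce h2K q g (B + 1) 1 hq1 hqodd le_rfl (by omega) ordq1
      (ωq ^ E) hθq
    rw [key, hSP1, one_mul, hSQred]
    -- now the RHS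
    have hstep2 : ∑ t ∈ DPQ p q g y 0 1 1, (β ^ (p ^ (m - 1) * q ^ (n - 1))) ^ (l * t)
        = ∑ x ∈ GC0 g y (p ^ 1 * q ^ 1) (dij p q 1 1 / 2) (eij p q 1 1),
            β ^ (p ^ (m - 1) * q ^ (n - 1) * l * x) := by
      have hDD : DPQ p q g y 0 1 1
          = GC0 g y (p ^ 1 * q ^ 1) (dij p q 1 1 / 2) (eij p q 1 1) := rfl
      rw [hDD]
      apply Finset.sum_congr rfl
      intro x _
      rw [← pow_mul]
      congr 1
      ring
    rw [hstep2, master p q m n g y 1 1 l (p ^ 1 * q ^ 1) hp hq hpodd hqodd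
      le_rfl hm le_rfl hn ordp1 ordq1 hyp_1 hyq_1 dvd_rfl β ωp ωq hsplit hωp1 hωq1]
    have hη1p : (ωp ^ (p ^ (m - 1) * q ^ (n - 1) * l)) ^ (p ^ 1) = 1 := by
      rw [← pow_mul]
      apply (hωpord _).mpr
      refine ⟨q ^ (n - 1) * l, ?_⟩
      have h1 : p ^ (m - 1) * p ^ 1 = p ^ m := by rw [← pow_add]; congr 1; omega
      rw [← h1]; ring
    have hη1p' : (ωp ^ (p ^ (m - 1) * q ^ (n - 1) * l)) ^ p = 1 := by
      have := hη1p
      rwa [pow_one] at this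
    have hη1ne : ωp ^ (p ^ (m - 1) * q ^ (n - 1) * l) ≠ 1 := by
      rw [← hEeq]; exact hη1
    have hSPrhs : ∑ u ∈ range (p ^ (1 - 1) * (p - 1)),
        (ωp ^ (p ^ (m - 1) * q ^ (n - 1) * l)) ^ (g ^ u) = 1 :=
      SP_one h2K p 1 g hp hpodd le_rfl ordp1 _ hη1p hη1ne hη1p'
    rw [hSPrhs, one_mul, hEeq]
  · -- case 3 : A + 1 < i ∨ B + 1 < j
    rintro (hcase | hcase)
    · -- SP = 0
      have hηp : (ωp ^ E) ^ p ≠ 1 := by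
        rw [← pow_mul]
        intro h
        have hd := (hωpord _).mp h
        have hre : E * p = p ^ (m - i + A + 1) * (q ^ (n - j + B) * l) := by
          rw [hE]
          have h1 : p ^ (m - i) * p ^ A * p = p ^ (m - i + A + 1) := by
            rw [← pow_add, ← pow_succ]
          have h2 : q ^ (n - j) * q ^ B = q ^ (n - j + B) := by rw [← pow_add]
          calc p ^ (m - i) * q ^ (n - j) * (p ^ A * q ^ B * l) * p
              = (p ^ (m - i) * p ^ A * p) * ((q ^ (n - j) * q ^ B) * l) := by ring
            _ = p ^ (m - i + A + 1) * (q ^ (n - j + B) * l) := by rw [h1, h2]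
        rw [hre] at hd
        exact not_pow_dvd_of hp1 (by omega) (hpY (n - j + B)) hd
      rw [key, SP_zero p i g hp hi1 ordpi (ωp ^ E) hEpi hηp, zero_mul]
    · -- SQ = 0
      have hjB2 : 2 ≤ j - B := by omega
      have ordjs : orderOf (g : ZMod (q ^ (j - B))) = q ^ (j - B - 1) * (q - 1) := by
        rw [hgq (j - B) (by omega) (by omega), Nat.totient_prime_pow hq (by omega)]
      have ordjs' : orderOf (g : ZMod (q ^ (j - B - 1))) = q ^ (j - B - 2) * (q - 1) := by
        rw [hgq (j - B - 1) (by omega) (by omega), Nat.totient_prime_pow hq (by omega)]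
        congr 2
      have hθ1 : (ωq ^ E) ^ (q ^ (j - B)) = 1 := by
        rw [← pow_mul]
        apply (hωqord _).mpr
        refine ⟨p ^ (m - i) * p ^ A * l, ?_⟩
        have h1 : q ^ (n - j) * q ^ B * q ^ (j - B) = q ^ n := by
          rw [← pow_add, ← pow_add]; congr 1; omega
        rw [hE, ← h1]; ring
      have hθ2 : (ωq ^ E) ^ (q ^ (j - B - 1)) ≠ 1 := by
        rw [← pow_mul]
        intro h
        have hd := (hωqord _).mp h
        have hre : E * q ^ (j - B - 1) = q ^ (n - 1) * (p ^ (m - i + A) * l) := by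
          rw [hE]
          have h1 : q ^ (n - j) * q ^ B * q ^ (j - B - 1) = q ^ (n - 1) := by
            rw [← pow_add, ← pow_add]; congr 1; omega
          have h2 : p ^ (m - i) * p ^ A = p ^ (m - i + A) := by rw [← pow_add]
          calc p ^ (m - i) * q ^ (n - j) * (p ^ A * q ^ B * l) * q ^ (j - B - 1)
              = (q ^ (n - j) * q ^ B * q ^ (j - B - 1)) * ((p ^ (m - i) * p ^ A) * l) := by
                ring
            _ = q ^ (n - 1) * (p ^ (m - i + A) * l) := by rw [h1, h2]
        rw [hre] at hd
        exact not_pow_dvd_of hq1 (by omega) (hqY (m - i + A)) hd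
      have hred := SQ_reduce h2K q g j (j - B) hq1 hqodd (by omega) (by omega) ordjs
        (ωq ^ E) hθ1
      have hdeep := SQ_deep q g (j - B) hq hqodd hjB2 ordjs ordjs' (ωq ^ E) hθ1 hθ2
      rw [key, hred, hdeep, mul_zero]
  · -- case 4 : i ≤ A ∧ j = B + 1
    rintro ⟨hiA, hjB⟩
    have hη1 : ωp ^ E = 1 := by
      apply (hωpord _).mpr
      refine ⟨p ^ (A - i) * (q ^ (n - j) * (q ^ B * l)), ?_⟩
      have h1 : p ^ m * p ^ (A - i) = p ^ (m - i) * p ^ A := by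
        rw [← pow_add, ← pow_add]; congr 1; omega
      rw [hE]
      calc p ^ (m - i) * q ^ (n - j) * (p ^ A * q ^ B * l)
          = (p ^ (m - i) * p ^ A) * (q ^ (n - j) * (q ^ B * l)) := by ring
        _ = p ^ m * (p ^ (A - i) * (q ^ (n - j) * (q ^ B * l))) := by rw [← h1]; ring
    rw [key]
    have hSP : ∑ u ∈ range (p ^ (i - 1) * (p - 1)), (ωp ^ E) ^ (g ^ u)
        = (((p ^ (i - 1) * (p - 1)) : ℕ) : K) := by
      rw [Finset.sum_congr rfl (fun u _ => by rw [hη1, one_pow] :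
        ∀ u ∈ range (p ^ (i - 1) * (p - 1)), (ωp ^ E) ^ (g ^ u) = 1)]
      simp
    rw [hSP, even_cast_eq_zero h2K hφpe, zero_mul]
  · -- case 5 : i = A + 1 ∧ j ≤ B
    rintro ⟨hiA, hjB⟩
    subst hiA
    have hEeq : E = p ^ (m - 1) * (q ^ (n - j) * (q ^ B * l)) := by
      rw [hE]
      have h1 : p ^ (m - (A + 1)) * p ^ A = p ^ (m - 1) := by
        rw [← pow_add]; congr 1; omega
      calc p ^ (m - (A + 1)) * q ^ (n - j) * (p ^ A * q ^ B * l)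
          = (p ^ (m - (A + 1)) * p ^ A) * (q ^ (n - j) * (q ^ B * l)) := by ring
        _ = p ^ (m - 1) * (q ^ (n - j) * (q ^ B * l)) := by rw [h1]
    have hηp : (ωp ^ E) ^ p = 1 := by
      rw [← pow_mul]
      apply (hωpord _).mpr
      refine ⟨q ^ (n - j) * (q ^ B * l), ?_⟩
      have h1 : p ^ (m - 1) * p = p ^ m := by rw [← pow_succ]; congr 1; omega
      rw [hEeq, ← h1]; ring
    have hη1 : ωp ^ E ≠ 1 := by
      intro h
      have hd := (hωpord E).mp h
      rw [hEeq] at hd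
      have hd2 : p ^ m ∣ p ^ (m - 1) * (q ^ (n - j + B) * l) := by
        have hq2 : q ^ (n - j) * (q ^ B * l) = q ^ (n - j + B) * l := by
          rw [← mul_assoc, ← pow_add]
        rwa [hq2] at hd
      exact not_pow_dvd_of hp1 (by omega) (hpY (n - j + B)) hd2
    have hSP1 : ∑ u ∈ range (p ^ (A + 1 - 1) * (p - 1)), (ωp ^ E) ^ (g ^ u) = 1 :=
      SP_one h2K p (A + 1) g hp hpodd (by omega) ordpi (ωp ^ E) hEpi hη1 hηp
    have hθ1 : ωq ^ E = 1 := by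
      apply (hωqord _).mpr
      refine ⟨q ^ (B - j) * (p ^ (m - 1) * l), ?_⟩
      have h1 : q ^ n * q ^ (B - j) = q ^ (n - j) * q ^ B := by
        rw [← pow_add, ← pow_add]; congr 1; omega
      rw [hEeq]
      calc p ^ (m - 1) * (q ^ (n - j) * (q ^ B * l))
          = (q ^ (n - j) * q ^ B) * (p ^ (m - 1) * l) := by ring
        _ = q ^ n * (q ^ (B - j) * (p ^ (m - 1) * l)) := by rw [← h1]; ring
    rw [key, hSP1, one_mul]
    have hSQ : ∑ v ∈ range (q ^ (j - 1) * (q - 1) / 2), (ωq ^ E) ^ (g ^ (2 * v))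
        = (((q ^ (j - 1) * (q - 1) / 2) : ℕ) : K) := by
      rw [Finset.sum_congr rfl (fun v _ => by rw [hθ1, one_pow] :
        ∀ v ∈ range (q ^ (j - 1) * (q - 1) / 2), (ωq ^ E) ^ (g ^ (2 * v)) = 1)]
      simp
    rw [hSQ]
    obtain ⟨R, hR⟩ : ∃ R, q - 1 = 2 * R := by obtain ⟨a, ha⟩ := hqodd; exact ⟨a, by omega⟩
    have hval : q ^ (j - 1) * (q - 1) / 2 = q ^ (j - 1) * ((q - 1) / 2) := by
      rw [hR]
      have h1 : q ^ (j - 1) * (2 * R) = 2 * (q ^ (j - 1) * R) := by ring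
      rw [h1, Nat.mul_div_cancel_left _ (by norm_num), Nat.mul_div_cancel_left _ (by norm_num)]
    rw [hval, Nat.cast_mul, odd_cast_eq_one h2K (hqodd.pow), one_mul]


end
end

section
/- Let k = p^a q^b l with gcd(l, pq) = 1, 0 ≤ a ≤ m−1, 0 ≤ b ≤ n−1, and set ζ_p = β^{p^{m−1} q^{n+b}} (a primitive p-th root of unity). Then for all 1 ≤ i ≤ m: S_0^{(i,0)}(β^k) = p^{i−1}(p−1)/2 (as an element of F_{4^{d*}}) if i ≤ a; S_0^{(i,0)}(β^k) = Σ_{t ∈ D_0^{(p)}} ζ_p^{lt} if i = a+1; and S_0^{(i,0)}(β^k) = 0 if i > a+1. -/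
open Finset Polynomial

noncomputable section

/-!
Write `m = e + i`. Then `ξ = β ^ (p ^ e * q ^ n)` is a primitive `p ^ i`-th root of unity and,
indexing `D₀^(2p^i)` by `t ↦ g ^ (2 * t)`, the sum becomes `∑_{t < φ(p^i)/2} (ξ ^ k) ^ g ^ (2 * t)`.
If `i ≤ a` then `ξ ^ k = 1`. If `i = a + 1` the summand has period `(p - 1) / 2` in `t`, and its
`p ^ a` repetitions collapse because `p ^ a` is odd and the characteristic is `2`. If
`i = a + 2 + j`, split `t = b * P + t'` with `P = φ(p^(j+1))/2`: `w = g ^ (2 * P)` is `1` modulo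
`p ^ (j + 1)` but not modulo `p ^ (j + 2)`, so for fixed `t'` the terms over `b < p ^ (a + 1)`
form a geometric progression whose ratio is a nontrivial `p`-th root of unity, and sum to `0`.
-/

open scoped Nat

lemma GC0_one_eq_image (g M D : ℕ) :
    GC0 g 1 M D 1 = (range D).image fun t => g ^ (2 * t) % M := by
  ext x
  simp [GC0]

lemma sum_GC0_one {α : Type*} [AddCommMonoid α] {g M n D : ℕ} (hn : n ∣ M)
    (hg : orderOf (g : ZMod n) = 2 * D) (f : ℕ → α) :
    ∑ x ∈ GC0 g 1 M D 1, f x = ∑ t ∈ range D, f (g ^ (2 * t) % M) := by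
  rw [GC0_one_eq_image, sum_image]
  intro a ha b hb hab
  simp only [coe_range, Set.mem_Iio] at ha hb
  have hpow : (g : ZMod n) ^ (2 * a) = (g : ZMod n) ^ (2 * b) := by
    exact_mod_cast (ZMod.natCast_eq_natCast_iff _ _ _).mpr (Nat.ModEq.of_dvd hn hab)
  have h := pow_injOn_Iio_orderOf (x := (g : ZMod n))
    (Set.mem_Iio.mpr (by omega : 2 * a < orderOf (g : ZMod n)))
    (Set.mem_Iio.mpr (by omega : 2 * b < orderOf (g : ZMod n))) hpow
  omega

lemma sum_scaled {α : Type*} [AddCommMonoid α] {c : ℕ} (hc : c ≠ 0) (s : Finset ℕ)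
    (f : ℕ → α) : ∑ x ∈ scaled c s, f x = ∑ x ∈ s, f (c * x) :=
  sum_image fun _ _ _ _ h => Nat.eq_of_mul_eq_mul_left (Nat.pos_of_ne_zero hc) h

lemma two_mul_totient_prime_pow_div_two {p i : ℕ} (hp : p.Prime) (hodd : Odd p) (hi : i ≠ 0) :
    2 * (p ^ (i - 1) * (p - 1) / 2) = φ (p ^ i) := by
  rw [Nat.totient_prime_pow hp (Nat.pos_of_ne_zero hi)]
  exact Nat.mul_div_cancel' (dvd_mul_of_dvd_right (Nat.Odd.sub_odd hodd odd_one).two_dvd _)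

lemma sum_H2P_zero_pow {R : Type*} [CommSemiring R] {p q m n g i : ℕ} (hp : p.Prime)
    (hodd : Odd p) (hq : q ≠ 0) (hi : i ≠ 0) (hg : orderOf (g : ZMod (p ^ i)) = φ (p ^ i))
    (z : R) (hz : (z ^ (p ^ (m - i) * q ^ n)) ^ p ^ i = 1) :
    ∑ t ∈ H2P p q m n g 0 i, z ^ t
      = ∑ t ∈ range (p ^ (i - 1) * (p - 1) / 2), (z ^ (p ^ (m - i) * q ^ n)) ^ g ^ (2 * t) := by
  have hz2 : (z ^ (p ^ (m - i) * q ^ n)) ^ (2 * p ^ i) = 1 := by rw [pow_mul', hz, one_pow]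
  rw [H2P, D2P, GC, if_pos rfl, sum_scaled (by positivity [hp.pos]),
    sum_GC0_one (dvd_mul_left _ 2) (hg.trans (two_mul_totient_prime_pow_div_two hp hodd hi).symm)]
  refine sum_congr rfl fun t _ => ?_
  rw [pow_mul z, pow_eq_pow_of_modEq (Nat.mod_modEq _ _) hz2]

lemma sum_DP_zero {α : Type*} [AddCommMonoid α] {p g i : ℕ} (hp : p.Prime) (hodd : Odd p)
    (hi : i ≠ 0) (hg : orderOf (g : ZMod (p ^ i)) = φ (p ^ i)) (f : ℕ → α) :
    ∑ x ∈ DP p g 0 i, f x = ∑ t ∈ range (p ^ (i - 1) * (p - 1) / 2), f (g ^ (2 * t) % p ^ i) := by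
  rw [DP, GC, if_pos rfl,
    sum_GC0_one dvd_rfl (hg.trans (two_mul_totient_prime_pow_div_two hp hodd hi).symm)]

lemma sum_range_mul_eq_sum_sum {α : Type*} [AddCommMonoid α] (f : ℕ → α) (s P : ℕ) :
    ∑ t ∈ range (s * P), f t = ∑ b ∈ range s, ∑ a ∈ range P, f (b * P + a) := by
  induction s with
  | zero => simp
  | succ s ih => rw [Nat.succ_mul, sum_range_add, ih, sum_range_succ]

lemma sum_range_mul_pow_pow_two_mul {R : Type*} [CommSemiring R] (γ : R) (g s P : ℕ) :
    ∑ t ∈ range (s * P), γ ^ g ^ (2 * t)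
      = ∑ a ∈ range P, ∑ b ∈ range s, (γ ^ g ^ (2 * a)) ^ (g ^ (2 * P)) ^ b := by
  rw [sum_range_mul_eq_sum_sum, sum_comm]
  refine sum_congr rfl fun a _ => sum_congr rfl fun b _ => ?_
  rw [← pow_mul, ← pow_mul, ← pow_add]
  ring_nf

lemma sum_range_mul_pow_pow_two_mul_of_modEq {R : Type*} [CommSemiring R] {γ : R} {n g P : ℕ}
    (hγ : γ ^ n = 1) (hg : g ^ (2 * P) ≡ 1 [MOD n]) (s : ℕ) :
    ∑ t ∈ range (s * P), γ ^ g ^ (2 * t) = s • ∑ t ∈ range P, γ ^ g ^ (2 * t) := by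
  have hper : ∀ a b, (γ ^ g ^ (2 * a)) ^ (g ^ (2 * P)) ^ b = γ ^ g ^ (2 * a) := fun a b => by
    rw [← pow_mul]
    exact pow_eq_pow_of_modEq (by simpa using ((hg.pow b).mul_left (g ^ (2 * a)))) hγ
  simp only [sum_range_mul_pow_pow_two_mul, hper, sum_const, card_range, smul_sum]

lemma pow_pow_eq_mul_pow {M : Type*} [CommMonoid M] {δ ω : M} {w : ℕ} (hδ : δ ^ w = δ * ω)
    (hω : ω ^ w = ω) (b : ℕ) : δ ^ w ^ b = δ * ω ^ b := by
  induction b with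
  | zero => simp
  | succ b ih => rw [pow_succ, pow_mul, ih, mul_pow, hδ, pow_right_comm, hω, pow_succ', mul_assoc]

/-- The terms are `δ ^ w ^ b = δ * ω ^ b` with `ω = δ ^ (w - 1)`, a nontrivial root of unity
fixed by `x ↦ x ^ w`. -/
lemma sum_pow_pow_eq_zero {K : Type*} [Field K] {δ : K} {M w s : ℕ} (hδ : IsPrimitiveRoot δ M)
    (hw : ¬ M ∣ w - 1) (hw2 : M ∣ (w - 1) ^ 2) (hs : M ∣ (w - 1) * s) :
    ∑ b ∈ range s, δ ^ w ^ b = 0 := by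
  have hw1 : w - 1 + 1 = w := Nat.sub_add_cancel (Nat.one_le_iff_ne_zero.mpr (by
    rintro rfl; exact hw (dvd_zero M)))
  set ω := δ ^ (w - 1)
  have hδω : δ ^ w = δ * ω := by rw [← hw1, pow_succ']
  have hω1 : ω ^ (w - 1) = 1 := by rw [← pow_mul, ← sq, hδ.pow_eq_one_iff_dvd]; exact hw2
  have hωw : ω ^ w = ω := by
    rw [← hw1, pow_succ, hω1, one_mul]
  have hωne : ω ≠ 1 := by rwa [Ne, hδ.pow_eq_one_iff_dvd]
  have hωs : ω ^ s = 1 := by rw [← pow_mul, hδ.pow_eq_one_iff_dvd]; exact hs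
  simp only [pow_pow_eq_mul_pow hδω hωw, ← mul_sum, geom_sum_eq hωne, hωs, sub_self, zero_div,
    mul_zero]

lemma coprime_of_orderOf_eq_totient {g n : ℕ} (hn : n ≠ 0)
    (hg : orderOf (g : ZMod n) = φ n) : g.Coprime n :=
  (ZMod.isUnit_iff_coprime g n).mp
    (orderOf_pos_iff.mp (hg ▸ Nat.totient_pos.mpr (Nat.pos_of_ne_zero hn))).isUnit

lemma dvd_pow_totient_sub_one {g n : ℕ} (h : g.Coprime n) : n ∣ g ^ φ n - 1 :=
  Nat.dvd_of_mod_eq_zero (Nat.sub_mod_eq_zero_of_mod_eq (Nat.ModEq.pow_totient h))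

/-- A primitive root modulo `p ^ (j + 2)` has order `p * φ (p ^ (j + 1))` there. -/
lemma not_dvd_pow_totient_sub_one {p g j : ℕ} (hp : p.Prime)
    (hg : orderOf (g : ZMod (p ^ (j + 2))) = φ (p ^ (j + 2))) :
    ¬ p ^ (j + 2) ∣ g ^ φ (p ^ (j + 1)) - 1 := by
  intro h
  have hg0 : g ≠ 0 := by
    rintro rfl
    have := coprime_of_orderOf_eq_totient (pow_ne_zero _ hp.ne_zero) hg
    simp [hp.ne_one] at this
  have hpow : (g : ZMod (p ^ (j + 2))) ^ φ (p ^ (j + 1)) = 1 := by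
    have := (ZMod.natCast_eq_zero_iff _ _).mpr h
    rwa [Nat.cast_sub (Nat.one_le_iff_ne_zero.mpr (pow_ne_zero _ hg0)), sub_eq_zero,
      Nat.cast_pow, Nat.cast_one] at this
  have hlt : φ (p ^ (j + 1)) < φ (p ^ (j + 2)) := by
    rw [Nat.totient_prime_pow_succ hp, Nat.totient_prime_pow_succ hp]
    exact Nat.mul_lt_mul_of_pos_right (Nat.pow_lt_pow_right hp.one_lt j.lt_succ_self)
      (Nat.sub_pos_of_lt hp.one_lt)
  exact Nat.not_dvd_of_pos_of_lt (Nat.totient_pos.mpr (pow_pos hp.pos _)) hlt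
    (hg ▸ orderOf_dvd_of_pow_eq_one hpow)

lemma sum_range_pow_pow_two_mul_eq_zero {K : Type*} [Field K] {γ : K} {p g A j : ℕ}
    (hp : p.Prime) (hodd : Odd p) (hγ : IsPrimitiveRoot γ (p ^ (j + 2)))
    (hg : orderOf (g : ZMod (p ^ (j + 2))) = φ (p ^ (j + 2))) :
    ∑ t ∈ range (p ^ (A + 1 + j) * (p - 1) / 2), γ ^ g ^ (2 * t) = 0 := by
  have hcop : g.Coprime p := (coprime_of_orderOf_eq_totient (pow_ne_zero _ hp.ne_zero)
    hg).coprime_dvd_right (dvd_pow_self p (Nat.succ_ne_zero _))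
  have hP : 2 * (p ^ j * (p - 1) / 2) = φ (p ^ (j + 1)) :=
    two_mul_totient_prime_pow_div_two hp hodd (Nat.succ_ne_zero j)
  have hc : p ^ (j + 1) ∣ g ^ φ (p ^ (j + 1)) - 1 := dvd_pow_totient_sub_one (hcop.pow_right _)
  rw [pow_add, mul_assoc, Nat.mul_div_assoc _ (dvd_mul_of_dvd_right
    (Nat.Odd.sub_odd hodd odd_one).two_dvd _), sum_range_mul_pow_pow_two_mul, hP]
  refine sum_eq_zero fun a _ => sum_pow_pow_eq_zero (hγ.pow_of_coprime _ (hcop.pow _ _))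
    (not_dvd_pow_totient_sub_one hp hg) ?_ ?_
  · exact (pow_dvd_pow p (by omega : j + 2 ≤ (j + 1) * 2)).trans
      (by rw [pow_mul]; exact pow_dvd_pow_of_dvd hc 2)
  · rw [pow_succ]
    exact mul_dvd_mul hc (dvd_pow_self p (Nat.succ_ne_zero A))

lemma sum_range_pow_pow_two_mul_eq_sum_DP {K : Type*} [Field K] [CharP K 2] {p g : ℕ}
    (hp : p.Prime) (hodd : Odd p) (hg : orderOf (g : ZMod (p ^ 1)) = φ (p ^ 1)) {ζ : K}
    (hζ : ζ ^ p = 1) (A l : ℕ) :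
    ∑ t ∈ range (p ^ A * (p - 1) / 2), (ζ ^ l) ^ g ^ (2 * t) = ∑ t ∈ DP p g 0 1, ζ ^ (l * t) := by
  have h2 : 2 ∣ p - 1 := (Nat.Odd.sub_odd hodd odd_one).two_dvd
  have hg1 : g ^ (2 * ((p - 1) / 2)) ≡ 1 [MOD p] := by
    rw [Nat.mul_div_cancel' h2, ← Nat.totient_prime hp]
    simpa using Nat.ModEq.pow_totient
      (coprime_of_orderOf_eq_totient (pow_ne_zero 1 hp.ne_zero) hg)
  have hζl : (ζ ^ l) ^ p = 1 := by rw [pow_right_comm, hζ, one_pow]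
  rw [sum_DP_zero hp hodd one_ne_zero hg, Nat.sub_self, pow_zero, one_mul, pow_one,
    Nat.mul_div_assoc _ h2, sum_range_mul_pow_pow_two_mul_of_modEq hζl hg1, nsmul_eq_mul,
    CharTwo.natCast_eq_ite, if_neg (Nat.not_even_iff_odd.mpr hodd.pow), one_mul]
  exact sum_congr rfl fun t _ => by rw [pow_mul ζ, pow_eq_pow_of_modEq (Nat.mod_modEq _ _) hζl]

theorem statement6_general
    (p q m n g : ℕ)
    (hp : p.Prime) (hq : q.Prime) (hpq : p ≠ q) (hpodd : Odd p)
    (hgp : ∀ i, 1 ≤ i → i ≤ m → orderOf (g : ZMod (p ^ i)) = Nat.totient (p ^ i))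
    (K : Type*) [Field K] [Fintype K]
    (hK : Fintype.card K = 4 ^ orderOf (4 : ZMod (p ^ m * q ^ n)))
    (β : K) (hβ : IsPrimitiveRoot β (p ^ m * q ^ n))
    (A B l : ℕ) (hl : Nat.gcd l (p * q) = 1)
    : ∀ i, 1 ≤ i → i ≤ m →
      ((i ≤ A →
          ∑ t ∈ H2P p q m n g 0 i, (β ^ (p ^ A * q ^ B * l)) ^ t
            = ((p ^ (i - 1) * (p - 1) / 2 : ℕ) : K)) ∧
        (i = A + 1 →
          ∑ t ∈ H2P p q m n g 0 i, (β ^ (p ^ A * q ^ B * l)) ^ t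
            = ∑ t ∈ DP p g 0 1, (β ^ (p ^ (m - 1) * q ^ (n + B))) ^ (l * t)) ∧
        (A + 1 < i →
          ∑ t ∈ H2P p q m n g 0 i, (β ^ (p ^ A * q ^ B * l)) ^ t = 0)) := by
  intro i hi him
  have : CharP K 2 := charP_of_card_eq_prime_pow (hK.trans (pow_mul 2 2 _).symm)
  obtain ⟨e, rfl⟩ : ∃ e, m = e + i := ⟨m - i, by omega⟩
  set ξ := β ^ (p ^ e * q ^ n)
  have hξ : IsPrimitiveRoot ξ (p ^ i) := hβ.pow (by positivity [hp.pos, hq.pos]) (by ring)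
  have hk : (β ^ (p ^ A * q ^ B * l)) ^ (p ^ (e + i - i) * q ^ n) = ξ ^ (p ^ A * q ^ B * l) := by
    rw [Nat.add_sub_cancel, ← pow_mul, ← pow_mul, mul_comm]
  rw [sum_H2P_zero_pow hp hpodd hq.ne_zero (by omega) (hgp i hi him) _
    (by rw [hk, ← pow_mul, hξ.pow_eq_one_iff_dvd]; exact dvd_mul_left _ _), hk]
  refine ⟨fun hiA => ?_, fun hiA => ?_, fun hiA => ?_⟩
  · have h1 : ξ ^ (p ^ A * q ^ B * l) = 1 :=
      (hξ.pow_eq_one_iff_dvd _).mpr (((pow_dvd_pow p hiA).mul_right _).mul_right _)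
    simp [h1]
  · subst hiA
    have hζ : IsPrimitiveRoot (ξ ^ p ^ A) p := hξ.pow (pow_pos hp.pos _) (pow_succ p A)
    have hβζ : β ^ (p ^ (e + (A + 1) - 1) * q ^ (n + B)) = (ξ ^ p ^ A) ^ q ^ B := by
      rw [show e + (A + 1) - 1 = e + A by omega, ← pow_mul, ← pow_mul]
      ring_nf
    rw [hβζ, ← sum_range_pow_pow_two_mul_eq_sum_DP hp hpodd (hgp 1 le_rfl (by omega))
      (by rw [pow_right_comm, hζ.pow_eq_one, one_pow]), Nat.add_sub_cancel, pow_mul ξ, pow_mul ξ]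
  · obtain ⟨j, rfl⟩ : ∃ j, i = A + 2 + j := ⟨i - (A + 2), by omega⟩
    have hη : IsPrimitiveRoot ((ξ ^ p ^ A) ^ (q ^ B * l)) (p ^ (j + 2)) :=
      (hξ.pow (pow_pos hp.pos _) (by ring)).pow_of_coprime _ (Nat.Coprime.pow_right _
        (Nat.Coprime.mul_left (((Nat.coprime_primes hq hp).mpr hpq.symm).pow_left B)
          (Nat.Coprime.coprime_dvd_right (dvd_mul_right p q) hl)))
    rw [show A + 2 + j - 1 = A + 1 + j by omega, mul_assoc, pow_mul ξ]
    exact sum_range_pow_pow_two_mul_eq_zero hp hpodd hη (hgp (j + 2) (by omega) (by omega))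

theorem statement6
    (p q m n g y : ℕ)
    (hp : p.Prime) (hq : q.Prime) (hpq : p ≠ q) (hpodd : Odd p) (hqodd : Odd q)
    (hm : 1 ≤ m) (hn : 1 ≤ n) (hgodd : Odd g)
    (hgp : ∀ i, 1 ≤ i → i ≤ m → orderOf (g : ZMod (p ^ i)) = Nat.totient (p ^ i))
    (hg2p : ∀ i, 1 ≤ i → i ≤ m → orderOf (g : ZMod (2 * p ^ i)) = Nat.totient (2 * p ^ i))
    (hgq : ∀ j, 1 ≤ j → j ≤ n → orderOf (g : ZMod (q ^ j)) = Nat.totient (q ^ j))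
    (hg2q : ∀ j, 1 ≤ j → j ≤ n → orderOf (g : ZMod (2 * q ^ j)) = Nat.totient (2 * q ^ j))
    (hylt : y < 2 * (p ^ m * q ^ n))
    (hyg : y ≡ g [MOD 2 * p ^ m]) (hy1 : y ≡ 1 [MOD 2 * q ^ n])
    (K : Type*) [Field K] [Fintype K]
    (hK : Fintype.card K = 4 ^ orderOf (4 : ZMod (p ^ m * q ^ n)))
    (β : K) (hβ : IsPrimitiveRoot β (p ^ m * q ^ n))
    (A B l : ℕ) (hA : A ≤ m - 1) (hB : B ≤ n - 1) (hl : Nat.gcd l (p * q) = 1)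
    : ∀ i, 1 ≤ i → i ≤ m →
      ((i ≤ A →
          ∑ t ∈ H2P p q m n g 0 i, (β ^ (p ^ A * q ^ B * l)) ^ t
            = ((p ^ (i - 1) * (p - 1) / 2 : ℕ) : K)) ∧
        (i = A + 1 →
          ∑ t ∈ H2P p q m n g 0 i, (β ^ (p ^ A * q ^ B * l)) ^ t
            = ∑ t ∈ DP p g 0 1, (β ^ (p ^ (m - 1) * q ^ (n + B))) ^ (l * t)) ∧
        (A + 1 < i →
          ∑ t ∈ H2P p q m n g 0 i, (β ^ (p ^ A * q ^ B * l)) ^ t = 0)) :=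
  statement6_general p q m n g hp hq hpq hpodd hgp K hK β hβ A B l hl

end
end
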